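/- arXiv:2601.09289 — 6 statements merged into one kernel-verified Lean document; each statement's English description precedes it below -/
import Mathlib

section
/- Let h and w be positive integers, let C be a finite set of cards on the h×w grid such that every card (p,q) ∈ C has p ≠ q, and let k be a natural number. Then there exists a swish S ⊆ C (without flip or rotation) with |S| = k if and only if there exists a permutation σ of the set of grid points such that (p, σ(p)) ∈ C for every grid point p with σ(p) ≠ p, and the number of grid points p with σ(p) ≠ p equals k. -/
/-- The set of points of the `h × w` grid: pairs `(i, j)` with `1 ≤ i ≤ h`, `1 ≤ j ≤ w`. -/
def gridFinset (h w : ℕ) : Finset (ℕ × ℕ) := Finset.Icc 1 h ×ˢ Finset.Icc 1 w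

/-- A card: an ordered pair (hoop position, ball position). -/
abbrev SwishCard := (ℕ × ℕ) × (ℕ × ℕ)

/-- `S` is a swish (without flip or rotation) on the `h × w` grid:
at every grid point, either no hoop and no ball, or exactly one hoop and exactly one ball. -/
def IsSwish (h w : ℕ) (S : Finset SwishCard) : Prop :=
  ∀ x ∈ gridFinset h w,
    (((S.filter fun c => c.1 = x).card = 0) ∧ ((S.filter fun c => c.2 = x).card = 0)) ∨
    (((S.filter fun c => c.1 = x).card = 1) ∧ ((S.filter fun c => c.2 = x).card = 1))

theorem stmt0 (h w : ℕ) (hh : 0 < h) (hw : 0 < w) (C : Finset SwishCard)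
    (hC : ∀ c ∈ C, c.1 ∈ gridFinset h w ∧ c.2 ∈ gridFinset h w ∧ c.1 ≠ c.2) (k : ℕ) :
    (∃ S ⊆ C, IsSwish h w S ∧ S.card = k) ↔
    (∃ σ : Equiv.Perm {p : ℕ × ℕ // p ∈ gridFinset h w},
      (∀ p, σ p ≠ p → ((p : ℕ × ℕ), ((σ p : ℕ × ℕ))) ∈ C) ∧
      (Finset.univ.filter fun p => σ p ≠ p).card = k) := by
  classical
  constructor
  · rintro ⟨S, hSC, hsw, hScard⟩
    have hoop_uniq : ∀ x ∈ gridFinset h w, ∀ c ∈ S, ∀ d ∈ S, c.1 = x → d.1 = x → c = d := by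
      intro x hx c hc d hd hc1 hd1
      rcases hsw x hx with ⟨h0, _⟩ | ⟨h1, _⟩
      · exact absurd (Finset.mem_filter.mpr ⟨hc, hc1⟩)
          (by rw [Finset.card_eq_zero.mp h0]; exact Finset.notMem_empty _)
      · exact Finset.card_le_one.mp (le_of_eq h1) _
          (Finset.mem_filter.mpr ⟨hc, hc1⟩) _ (Finset.mem_filter.mpr ⟨hd, hd1⟩)
    have ball_uniq : ∀ x ∈ gridFinset h w, ∀ c ∈ S, ∀ d ∈ S, c.2 = x → d.2 = x → c = d := by
      intro x hx c hc d hd hc1 hd1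
      rcases hsw x hx with ⟨_, h0⟩ | ⟨_, h1⟩
      · exact absurd (Finset.mem_filter.mpr ⟨hc, hc1⟩)
          (by rw [Finset.card_eq_zero.mp h0]; exact Finset.notMem_empty _)
      · exact Finset.card_le_one.mp (le_of_eq h1) _
          (Finset.mem_filter.mpr ⟨hc, hc1⟩) _ (Finset.mem_filter.mpr ⟨hd, hd1⟩)
    have ball_hoop : ∀ x ∈ gridFinset h w, ∀ c ∈ S, c.2 = x → ∃ d, d ∈ S ∧ d.1 = x := by
      intro x hx c hc hc2
      rcases hsw x hx with ⟨_, h0⟩ | ⟨h1, _⟩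
      · exact absurd (Finset.mem_filter.mpr ⟨hc, hc2⟩)
          (by rw [Finset.card_eq_zero.mp h0]; exact Finset.notMem_empty _)
      · obtain ⟨d, hd⟩ := Finset.card_eq_one.mp h1
        have : d ∈ S.filter fun c => c.1 = x := by rw [hd]; exact Finset.mem_singleton_self d
        obtain ⟨hdS, hd1⟩ := Finset.mem_filter.mp this
        exact ⟨d, hdS, hd1⟩
    let f : {p : ℕ × ℕ // p ∈ gridFinset h w} → {p : ℕ × ℕ // p ∈ gridFinset h w} := fun p =>
      if hp : ∃ c, c ∈ S ∧ c.1 = (p : ℕ × ℕ) then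
        ⟨hp.choose.2, (hC _ (hSC hp.choose_spec.1)).2.1⟩
      else p
    have hf1 : ∀ (p : {p : ℕ × ℕ // p ∈ gridFinset h w}) (c : SwishCard),
        c ∈ S → c.1 = (p : ℕ × ℕ) → ((f p : ℕ × ℕ)) = c.2 := by
      intro p c hc hc1
      have hp : ∃ c, c ∈ S ∧ c.1 = (p : ℕ × ℕ) := ⟨c, hc, hc1⟩
      have hch : hp.choose = c :=
        hoop_uniq (p : ℕ × ℕ) p.2 _ hp.choose_spec.1 c hc hp.choose_spec.2 hc1
      show ((dite _ _ _ : {p : ℕ × ℕ // p ∈ gridFinset h w}) : ℕ × ℕ) = c.2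
      rw [dif_pos hp]
      exact congrArg Prod.snd hch
    have hf2 : ∀ (p : {p : ℕ × ℕ // p ∈ gridFinset h w}),
        (¬ ∃ c, c ∈ S ∧ c.1 = (p : ℕ × ℕ)) → f p = p := by
      intro p hp
      show (dite _ _ _ : {p : ℕ × ℕ // p ∈ gridFinset h w}) = p
      rw [dif_neg hp]
    have hinj : Function.Injective f := by
      intro p q hpq
      by_cases hp : ∃ c, c ∈ S ∧ c.1 = (p : ℕ × ℕ) <;>
        by_cases hq : ∃ c, c ∈ S ∧ c.1 = (q : ℕ × ℕ)
      · obtain ⟨c, hc, hc1⟩ := hp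
        obtain ⟨d, hd, hd1⟩ := hq
        have e1 := hf1 p c hc hc1
        have e2 := hf1 q d hd hd1
        have hcd : c.2 = d.2 := by rw [← e1, ← e2, hpq]
        have : c = d := ball_uniq c.2 (hC c (hSC hc)).2.1 c hc d hd rfl hcd.symm
        apply Subtype.ext
        rw [← hc1, ← hd1, this]
      · exfalso
        obtain ⟨c, hc, hc1⟩ := hp
        have e1 := hf1 p c hc hc1
        have e2 := hf2 q hq
        have : c.2 = (q : ℕ × ℕ) := by rw [← e1, hpq, e2]
        exact hq (ball_hoop (q : ℕ × ℕ) q.2 c hc this)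
      · exfalso
        obtain ⟨c, hc, hc1⟩ := hq
        have e1 := hf1 q c hc hc1
        have e2 := hf2 p hp
        have : c.2 = (p : ℕ × ℕ) := by rw [← e1, ← hpq, e2]
        exact hp (ball_hoop (p : ℕ × ℕ) p.2 c hc this)
      · rw [← hf2 p hp, ← hf2 q hq, hpq]
    let σ : Equiv.Perm {p : ℕ × ℕ // p ∈ gridFinset h w} :=
      Equiv.ofBijective f (Finite.injective_iff_bijective.mp hinj)
    have hσf : ∀ p, σ p = f p := fun _ => rfl
    have hmemC : ∀ p, σ p ≠ p → ((p : ℕ × ℕ), ((σ p : ℕ × ℕ))) ∈ C := by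
      intro p hne
      by_cases hp : ∃ c, c ∈ S ∧ c.1 = (p : ℕ × ℕ)
      · obtain ⟨c, hc, hc1⟩ := hp
        have e1 := hf1 p c hc hc1
        have : ((p : ℕ × ℕ), ((σ p : ℕ × ℕ))) = c := by
          rw [hσf, e1, ← hc1]
        rw [this]
        exact hSC hc
      · exact absurd (by rw [hσf]; exact hf2 p hp) hne
    have hne_of_hoop : ∀ (p : {p : ℕ × ℕ // p ∈ gridFinset h w}) (c : SwishCard),
        c ∈ S → c.1 = (p : ℕ × ℕ) → σ p ≠ p := by
      intro p c hc hc1 heq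
      have e1 := hf1 p c hc hc1
      have : c.2 = c.1 := by rw [← e1, ← hσf, heq, hc1]
      exact (hC c (hSC hc)).2.2 this.symm
    refine ⟨σ, hmemC, ?_⟩
    rw [← hScard]
    apply Finset.card_bij (fun (p : {p : ℕ × ℕ // p ∈ gridFinset h w}) _ => ((p : ℕ × ℕ), ((σ p : ℕ × ℕ))))
    · intro p hp
      simp only [Finset.mem_filter, Finset.mem_univ, true_and] at hp
      by_cases hpe : ∃ c, c ∈ S ∧ c.1 = (p : ℕ × ℕ)
      · obtain ⟨c, hc, hc1⟩ := hpe
        have : ((p : ℕ × ℕ), ((σ p : ℕ × ℕ))) = c := by rw [hσf, hf1 p c hc hc1, ← hc1]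
        rw [this]; exact hc
      · exact absurd (by rw [hσf]; exact hf2 p hpe) hp
    · intro p hp q hq hpq
      exact Subtype.ext (congrArg Prod.fst hpq)
    · intro c hc
      refine ⟨⟨c.1, (hC c (hSC hc)).1⟩, ?_, ?_⟩
      · simp only [Finset.mem_filter, Finset.mem_univ, true_and]
        exact hne_of_hoop _ c hc rfl
      · have e1 := hf1 ⟨c.1, (hC c (hSC hc)).1⟩ c hc rfl
        rw [hσf, e1]
  · rintro ⟨σ, hσC, hσcard⟩
    set T : Finset {p : ℕ × ℕ // p ∈ gridFinset h w} :=
      Finset.univ.filter (fun p => σ p ≠ p) with hT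
    let S : Finset SwishCard := T.image (fun (p : {p : ℕ × ℕ // p ∈ gridFinset h w}) => ((p : ℕ × ℕ), ((σ p : ℕ × ℕ))))
    have hmemS : ∀ c, c ∈ S ↔ ∃ p, σ p ≠ p ∧ ((p : ℕ × ℕ), ((σ p : ℕ × ℕ))) = c := by
      intro c
      simp only [S, Finset.mem_image, hT, Finset.mem_filter, Finset.mem_univ, true_and]
    refine ⟨S, ?_, ?_, ?_⟩
    · intro c hc
      obtain ⟨p, hp, rfl⟩ := (hmemS c).mp hc
      exact hσC p hp
    · intro x hx
      set px : {p : ℕ × ℕ // p ∈ gridFinset h w} := ⟨x, hx⟩ with hpx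
      by_cases hfix : σ px = px
      · left
        constructor <;> rw [Finset.card_eq_zero, Finset.filter_eq_empty_iff]
        · intro c hc hc1
          obtain ⟨p, hp, rfl⟩ := (hmemS c).mp hc
          exact hp (by rw [show p = px from Subtype.ext hc1, hfix])
        · intro c hc hc2
          obtain ⟨p, hp, rfl⟩ := (hmemS c).mp hc
          have : σ p = σ px := by rw [hfix]; exact Subtype.ext hc2
          exact hp (by rw [σ.injective this, hfix])
      · right
        constructor
        · rw [Finset.card_eq_one]
          refine ⟨(x, ((σ px : ℕ × ℕ))), Finset.eq_singleton_iff_unique_mem.mpr ⟨?_, ?_⟩⟩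
          · exact Finset.mem_filter.mpr ⟨(hmemS _).mpr ⟨px, hfix, rfl⟩, rfl⟩
          · intro c hc
            obtain ⟨hcs, hc1⟩ := Finset.mem_filter.mp hc
            obtain ⟨p, hp, rfl⟩ := (hmemS c).mp hcs
            have : p = px := Subtype.ext hc1
            rw [this]
        · rw [Finset.card_eq_one]
          have hq : σ (σ.symm px) ≠ σ.symm px := by
            intro heq
            apply hfix
            have : σ.symm px = px := by rw [← heq, Equiv.apply_symm_apply]
            rw [← this, Equiv.apply_symm_apply, this]
          refine ⟨(((σ.symm px : ℕ × ℕ)), x), Finset.eq_singleton_iff_unique_mem.mpr ⟨?_, ?_⟩⟩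
          · refine Finset.mem_filter.mpr ⟨(hmemS _).mpr ⟨σ.symm px, hq, ?_⟩, rfl⟩
            rw [Equiv.apply_symm_apply]
          · intro c hc
            obtain ⟨hcs, hc2⟩ := Finset.mem_filter.mp hc
            obtain ⟨p, hp, rfl⟩ := (hmemS c).mp hcs
            have hσp : σ p = px := Subtype.ext hc2
            have : p = σ.symm px := by rw [← hσp, Equiv.symm_apply_apply]
            rw [this, Equiv.apply_symm_apply]
    · rw [← hσcard]
      exact Finset.card_image_of_injOn
        (fun p _ q _ hpq => Subtype.ext (congrArg Prod.fst hpq))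
end

section
/- Let G = (V,E) be a finite directed graph with V nonempty. Then G has an even dicycle-factor if and only if the card set C(G) admits a swish S ⊆ C(G) of size 4|V| with horizontal flip allowed (and no rotation). -/
/-- A card on the grid with rows indexed by `V` and columns `{1,2,3,4}`:
an ordered pair (hoop position, ball position). -/
abbrev GCard (V : Type) := (V × ℕ) × (V × ℕ)

/-- The card `c_e = (u¹, v¹)` associated with an edge `e = (u, v)`. -/
def edgeCard {V : Type} (e : V × V) : GCard V := ((e.1, 1), (e.2, 1))

/-- The card `f_{v,j} = (vʲ, vʲ⁺¹)`. -/
def fCard {V : Type} (v : V) (j : ℕ) : GCard V := ((v, j), (v, j + 1))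

/-- The card set `C(G)` built from a directed graph `G = (V, E)`:
a card `c_e` for every edge `e ∈ E`, and cards `f_{v,j}` for `v ∈ V`, `j ∈ {1,2,3}`. -/
def cardSet {V : Type} [DecidableEq V] [Fintype V] (E : Finset (V × V)) :
    Finset (GCard V) :=
  E.image edgeCard ∪
    (Finset.univ ×ˢ ({1, 2, 3} : Finset ℕ)).image fun p => fCard p.1 p.2

/-- Horizontal flip of a card: each position `(v, j)` is replaced by `(v, 5 - j)`. -/
def flipCard {V : Type} (c : GCard V) : GCard V :=
  ((c.1.1, 5 - c.1.2), (c.2.1, 5 - c.2.2))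

/-- The placement of a card `c` given the choice `b c` of whether to flip it. -/
def placedF {V : Type} (b : GCard V → Bool) (c : GCard V) : GCard V :=
  if b c then flipCard c else c

/-- `S` together with the flipping choice `b` forms a swish: at every grid point
(row in `V`, column in `{1,2,3,4}`), either no hoop and no ball, or exactly one
hoop and exactly one ball among the placed cards. -/
def IsFlipSwishWith {V : Type} [DecidableEq V] [Fintype V]
    (S : Finset (GCard V)) (b : GCard V → Bool) : Prop :=
  ∀ x ∈ (Finset.univ ×ˢ ({1, 2, 3, 4} : Finset ℕ) : Finset (V × ℕ)),
    (((S.filter fun c => (placedF b c).1 = x).card = 0) ∧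
      ((S.filter fun c => (placedF b c).2 = x).card = 0)) ∨
    (((S.filter fun c => (placedF b c).1 = x).card = 1) ∧
      ((S.filter fun c => (placedF b c).2 = x).card = 1))

/-- `S` is a swish with horizontal flip allowed (and no rotation). -/
def IsFlipSwish {V : Type} [DecidableEq V] [Fintype V] (S : Finset (GCard V)) : Prop :=
  ∃ b : GCard V → Bool, IsFlipSwishWith S b

/-- Every orbit `{π^m v : m ∈ ℤ}` of the permutation `π` has even cardinality. -/
def AllOrbitsEven {V : Type} (π : Equiv.Perm V) : Prop :=
  ∀ v : V, Even (Nat.card {u : V | ∃ m : ℤ, (π ^ m) v = u})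

/-- `F` is an even dicycle-factor of the directed graph with edge set `E`:
`F = {(v, π v) : v ∈ V}` for a permutation `π` of `V` all of whose edges lie
in `E` and all of whose orbits have even cardinality. -/
def IsEvenDicycleFactor {V : Type} [DecidableEq V] [Fintype V]
    (E F : Finset (V × V)) : Prop :=
  ∃ π : Equiv.Perm V,
    F = Finset.univ.image (fun v => (v, π v)) ∧
    (∀ v : V, (v, π v) ∈ E) ∧ AllOrbitsEven π


open Function

section
variable {V : Type} [Fintype V] [DecidableEq V]

lemma perm_minimalPeriod_pos (π : Equiv.Perm V) (v : V) :
    0 < Function.minimalPeriod π v := by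
  apply Function.IsPeriodicPt.minimalPeriod_pos (n := orderOf π)
  · exact orderOf_pos π
  · unfold Function.IsPeriodicPt
    rw [Equiv.Perm.iterate_eq_pow, pow_orderOf_eq_one]
    rfl

lemma perm_pow_eq_mod {π : Equiv.Perm V} {r : V} {a b : ℕ}
    (h : (π ^ a) r = (π ^ b) r) : a ≡ b [MOD Function.minimalPeriod π r] := by
  set n := Function.minimalPeriod π r with hn
  have hper : r ∈ periodicPts ⇑π :=
    minimalPeriod_pos_iff_mem_periodicPts.1 (perm_minimalPeriod_pos π r)
  wlog hab : a ≤ b generalizing a b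
  · exact (this h.symm (le_of_not_ge hab)).symm
  have key : (π ^ (b - a)) ((π ^ a) r) = (π ^ a) r := by
    rw [← Equiv.Perm.mul_apply, ← pow_add, Nat.sub_add_cancel hab, ← h]
  have hper2 : IsPeriodicPt ⇑π (b - a) ((π ^ a) r) := by
    unfold IsPeriodicPt IsFixedPt
    rw [Equiv.Perm.iterate_eq_pow]
    exact key
  have hmp : Function.minimalPeriod π ((π ^ a) r) = n := by
    have := Function.minimalPeriod_apply_iterate hper a
    rwa [← Equiv.Perm.iterate_eq_pow π a] at *
  have hdvd : n ∣ b - a := by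
    have := hper2.minimalPeriod_dvd
    rwa [hmp] at this
  exact (Nat.modEq_iff_dvd' hab).2 hdvd

lemma perm_zpow_fix {V : Type} (π : Equiv.Perm V) (v : V) (n : ℕ)
    (hn : (π ^ n) v = v) (q : ℤ) : (π ^ ((n : ℤ) * q)) v = v := by
  have : Function.IsFixedPt (⇑(π ^ n)) v := hn
  have := (this.perm_zpow q)
  rwa [← zpow_natCast, ← zpow_mul] at this

/-- reduce an integer exponent to a natural one on an orbit -/
lemma perm_zpow_reduce {V : Type} [Fintype V] [DecidableEq V] (π : Equiv.Perm V) (v : V) (m : ℤ) :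
    ∃ k : ℕ, k < Function.minimalPeriod π v ∧ (π ^ k) v = (π ^ m) v := by
  set n := Function.minimalPeriod π v with hn
  have hpos := perm_minimalPeriod_pos π v
  have hfix : (π ^ n) v = v := by
    have := Function.iterate_minimalPeriod (f := ⇑π) (x := v)
    rwa [Equiv.Perm.iterate_eq_pow] at this
  have hnz : (n : ℤ) ≠ 0 := by exact_mod_cast hpos.ne'
  refine ⟨(m % n).toNat, ?_, ?_⟩
  · have h1 : 0 ≤ m % (n : ℤ) := Int.emod_nonneg m hnz
    have h2 : m % (n : ℤ) < n := Int.emod_lt_of_pos m (by exact_mod_cast hpos)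
    omega
  · have h1 : 0 ≤ m % (n : ℤ) := Int.emod_nonneg m hnz
    have : ((π ^ ((m % n).toNat) : Equiv.Perm V) : V → V) v = (π ^ (m % n)) v := by
      rw [← zpow_natCast, Int.toNat_of_nonneg h1]
    rw [this]
    have hdec : m = (n : ℤ) * (m / n) + m % n := (Int.mul_ediv_add_emod m n).symm
    have : (π ^ m) v = (π ^ (m % n)) ((π ^ ((n:ℤ) * (m / n))) v) := by
      rw [← Equiv.Perm.mul_apply, ← zpow_add, add_comm, ← hdec]
    rw [this, perm_zpow_fix π v n hfix]

/-- The orbit set is the image of `range n`. -/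
lemma orbit_card_eq {V : Type} [Fintype V] [DecidableEq V] (π : Equiv.Perm V) (v : V) :
    Nat.card {u : V | ∃ m : ℤ, (π ^ m) v = u} = Function.minimalPeriod π v := by
  set n := Function.minimalPeriod π v with hn
  have hset : {u : V | ∃ m : ℤ, (π ^ m) v = u}
      = ↑((Finset.range n).image fun k => (π ^ k) v) := by
    ext u
    simp only [Set.mem_setOf_eq, Finset.coe_image, Set.mem_image, Finset.mem_coe,
      Finset.mem_range]
    constructor
    · rintro ⟨m, rfl⟩
      obtain ⟨k, hk, hke⟩ := perm_zpow_reduce π v m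
      exact ⟨k, hk, hke⟩
    · rintro ⟨k, _, rfl⟩
      exact ⟨(k : ℤ), by rw [zpow_natCast]⟩
  rw [hset, Nat.card_coe_set_eq, Set.ncard_coe_finset]
  rw [Finset.card_image_of_injOn, Finset.card_range]
  intro a ha b hb hab
  simp only [Finset.mem_coe, Finset.mem_range] at ha hb
  have := Function.iterate_injOn_Iio_minimalPeriod (f := ⇑π) (x := v)
  have h2 := this (Set.mem_Iio.2 ha) (Set.mem_Iio.2 hb)
  apply h2
  simp only [Equiv.Perm.iterate_eq_pow]
  exact hab

end

section
variable {V : Type} [Fintype V] [DecidableEq V]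

lemma coloring_of_allOrbitsEven {π : Equiv.Perm V} (h : AllOrbitsEven π) :
    ∃ χ : V → Bool, ∀ v, χ (π v) = !χ v := by
  classical
  have heven : ∀ v, Even (Function.minimalPeriod π v) := by
    intro v
    have := h v
    rwa [orbit_card_eq] at this
  let s : Setoid V := ⟨π.SameCycle, ⟨fun x => Equiv.Perm.SameCycle.refl π x,
    fun h => h.symm, fun h1 h2 => h1.trans h2⟩⟩
  let rep : V → V := fun v => (Quotient.mk s v).out
  have hrep : ∀ v, π.SameCycle (rep v) v := by
    intro v
    have : Quotient.mk s ((Quotient.mk s v).out) = Quotient.mk s v := Quotient.out_eq _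
    exact Quotient.exact this
  have hrep_pi : ∀ v, rep (π v) = rep v := by
    intro v
    have : Quotient.mk s (π v) = Quotient.mk s v := by
      apply Quotient.sound
      show π.SameCycle (π v) v
      exact ⟨-1, by simp⟩
    show (Quotient.mk s (π v)).out = (Quotient.mk s v).out
    rw [this]
  have hex : ∀ v, ∃ k : ℕ, (π ^ k) (rep v) = v := by
    intro v
    obtain ⟨m, hm⟩ := hrep v
    obtain ⟨k, _, hk⟩ := perm_zpow_reduce π (rep v) m
    exact ⟨k, by rw [hk, hm]⟩
  let kk : V → ℕ := fun v => Nat.find (hex v)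
  have hkk : ∀ v, (π ^ (kk v)) (rep v) = v := fun v => Nat.find_spec (hex v)
  refine ⟨fun v => decide (Odd (kk v)), ?_⟩
  intro v
  have h1 : (π ^ (kk (π v))) (rep v) = π v := by
    have := hkk (π v); rwa [hrep_pi v] at this
  have h2 : (π ^ (kk v + 1)) (rep v) = π v := by
    rw [pow_succ']
    rw [Equiv.Perm.mul_apply, hkk v]
  have hmod : kk (π v) ≡ kk v + 1 [MOD Function.minimalPeriod π (rep v)] :=
    perm_pow_eq_mod (h1.trans h2.symm)
  have h2dvd : 2 ∣ Function.minimalPeriod π (rep v) := (heven (rep v)).two_dvd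
  have hmod2 : kk (π v) % 2 = (kk v + 1) % 2 := hmod.of_dvd h2dvd
  have : Odd (kk (π v)) ↔ ¬ Odd (kk v) := by
    rw [Nat.odd_iff, Nat.odd_iff]
    omega
  by_cases ho : Odd (kk v) <;> simp [this, ho]

lemma allOrbitsEven_of_coloring {π : Equiv.Perm V} {χ : V → Bool}
    (h : ∀ v, χ (π v) = !χ v) : AllOrbitsEven π := by
  intro v
  rw [orbit_card_eq]
  set n := Function.minimalPeriod π v with hn
  have hpos := perm_minimalPeriod_pos π v
  have key : ∀ k : ℕ, χ ((π ^ k) v) = if Odd k then !χ v else χ v := by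
    intro k
    induction k with
    | zero => simp
    | succ k ih =>
      rw [pow_succ', Equiv.Perm.mul_apply, h, ih]
      rcases Nat.even_or_odd k with he | ho
      · simp [Nat.even_iff.1 he, Nat.odd_iff, Nat.succ_mod_two_eq_one_iff.2, he,
          Nat.not_odd_iff_even.2 he, Nat.odd_add_one, Nat.not_odd_iff_even]
      · simp [ho, Nat.odd_add_one, Nat.not_even_iff_odd.2 ho, Nat.not_odd_iff_even,
          Nat.even_add_one, Nat.not_odd_iff_even.1]
  have hfix : (π ^ n) v = v := by
    have := Function.iterate_minimalPeriod (f := ⇑π) (x := v)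
    rwa [Equiv.Perm.iterate_eq_pow] at this
  have := key n
  rw [hfix] at this
  by_contra hodd
  rw [Nat.not_even_iff_odd] at hodd
  rw [if_pos hodd] at this
  simp at this


section Infra
variable {V : Type} [DecidableEq V] [Fintype V]

lemma filter_card_one {α : Type*} [DecidableEq α] {S : Finset α} {P : α → Prop} [DecidablePred P]
    (ex : ∃ c ∈ S, P c) (uniq : ∀ c ∈ S, ∀ c' ∈ S, P c → P c' → c = c') :
    (S.filter P).card = 1 := by
  obtain ⟨c, hc, hP⟩ := ex
  refine le_antisymm (Finset.card_le_one.2 ?_) (Finset.card_pos.2 ⟨c, Finset.mem_filter.2 ⟨hc, hP⟩⟩)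
  intro a ha b hb
  rw [Finset.mem_filter] at ha hb
  exact uniq a ha.1 b hb.1 ha.2 hb.2

lemma mem_cardSet_iff {E : Finset (V × V)} {c : GCard V} :
    c ∈ cardSet E ↔ (∃ e ∈ E, c = edgeCard e) ∨
      (∃ u, ∃ j, (j = 1 ∨ j = 2 ∨ j = 3) ∧ c = fCard u j) := by
  simp only [cardSet, Finset.mem_union, Finset.mem_image, Finset.mem_product,
    Finset.mem_univ, true_and, Finset.mem_insert, Finset.mem_singleton, Prod.exists]
  constructor
  · rintro (⟨e1, e2, he, rfl⟩ | ⟨u, j, hj, rfl⟩)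
    · exact Or.inl ⟨e1, e2, he, rfl⟩
    · exact Or.inr ⟨u, j, hj, rfl⟩
  · rintro (⟨e1, e2, he, rfl⟩ | ⟨u, j, hj, rfl⟩)
    · exact Or.inl ⟨e1, e2, he, rfl⟩
    · exact Or.inr ⟨u, j, hj, rfl⟩

end Infra


section Forward
variable {V : Type} [DecidableEq V] [Fintype V]

lemma forward_dir (E : Finset (V × V)) (π : Equiv.Perm V)
    (hE : ∀ v : V, (v, π v) ∈ E) (χ : V → Bool) (hχ : ∀ v, χ (π v) = !χ v) :
    ∃ S ⊆ cardSet E, IsFlipSwish S ∧ S.card = 4 * Fintype.card V := by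
  classical
  set b : GCard V → Bool := fun c => if c.2.2 = 1 then χ c.1.1 else !χ c.1.1 with hb
  set S : Finset (GCard V) :=
    (Finset.univ.image fun v => edgeCard (v, π v)) ∪
      ((Finset.univ ×ˢ ({1, 2, 3} : Finset ℕ)).image fun p => fCard p.1 p.2) with hSdef
  have hS : ∀ c, c ∈ S ↔ (∃ v, c = edgeCard (v, π v)) ∨
      (∃ u, ∃ j, (j = 1 ∨ j = 2 ∨ j = 3) ∧ c = fCard u j) := by
    intro c
    simp only [hSdef, Finset.mem_union, Finset.mem_image, Finset.mem_univ, true_and,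
      Finset.mem_product, Finset.mem_insert, Finset.mem_singleton, Prod.exists]
    constructor
    · rintro (⟨v, rfl⟩ | ⟨u, j, hj, rfl⟩)
      · exact Or.inl ⟨v, rfl⟩
      · exact Or.inr ⟨u, j, hj, rfl⟩
    · rintro (⟨v, rfl⟩ | ⟨u, j, hj, rfl⟩)
      · exact Or.inl ⟨v, rfl⟩
      · exact Or.inr ⟨u, j, hj, rfl⟩
  -- position computations
  have hoop_e : ∀ v : V, (placedF b (edgeCard (v, π v))).1 = (v, if χ v then 4 else 1) := by
    intro v
    by_cases h : χ v <;> simp [placedF, hb, edgeCard, flipCard, h]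
  have ball_e : ∀ v : V, (placedF b (edgeCard (v, π v))).2 = (π v, if χ v then 4 else 1) := by
    intro v
    by_cases h : χ v <;> simp [placedF, hb, edgeCard, flipCard, h]
  have hoop_f : ∀ (u : V) (j : ℕ), (j = 1 ∨ j = 2 ∨ j = 3) →
      (placedF b (fCard u j)).1 = (u, if χ u then j else 5 - j) := by
    intro u j hj
    have hj1 : j + 1 ≠ 1 := by omega
    by_cases h : χ u <;> simp [placedF, hb, fCard, flipCard, hj1, h, show j ≠ 0 by omega]
  have ball_f : ∀ (u : V) (j : ℕ), (j = 1 ∨ j = 2 ∨ j = 3) →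
      (placedF b (fCard u j)).2 = (u, if χ u then j + 1 else 4 - j) := by
    intro u j hj
    have hj1 : j + 1 ≠ 1 := by omega
    have h54 : 5 - (j + 1) = 4 - j := by omega
    by_cases h : χ u <;> simp [placedF, hb, fCard, flipCard, hj1, h, h54, show j ≠ 0 by omega]
  have hχinv : ∀ v : V, χ (π.symm v) = !χ v := by
    intro v
    have := hχ (π.symm v)
    rw [Equiv.apply_symm_apply] at this
    rw [← Bool.not_not (χ (π.symm v)), this]
  refine ⟨S, ?_, ⟨b, ?_⟩, ?_⟩
  · -- S ⊆ cardSet E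
    intro c hc
    rcases (hS c).1 hc with ⟨v, rfl⟩ | ⟨u, j, hj, rfl⟩
    · exact mem_cardSet_iff.2 (Or.inl ⟨(v, π v), hE v, rfl⟩)
    · exact mem_cardSet_iff.2 (Or.inr ⟨u, j, hj, rfl⟩)
  · -- swish
    intro x hx
    right
    rw [Finset.mem_product] at hx
    obtain ⟨v, t⟩ := x
    simp only [Finset.mem_insert, Finset.mem_singleton] at hx
    have ht : t = 1 ∨ t = 2 ∨ t = 3 ∨ t = 4 := hx.2
    constructor
    · -- hoops
      apply filter_card_one
      · -- existence
        by_cases h : χ v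
        · rcases ht with rfl | rfl | rfl | rfl
          · exact ⟨fCard v 1, (hS _).2 (Or.inr ⟨v, 1, by omega, rfl⟩), by rw [hoop_f v 1 (by omega)]; simp [h]⟩
          · exact ⟨fCard v 2, (hS _).2 (Or.inr ⟨v, 2, by omega, rfl⟩), by rw [hoop_f v 2 (by omega)]; simp [h]⟩
          · exact ⟨fCard v 3, (hS _).2 (Or.inr ⟨v, 3, by omega, rfl⟩), by rw [hoop_f v 3 (by omega)]; simp [h]⟩
          · exact ⟨edgeCard (v, π v), (hS _).2 (Or.inl ⟨v, rfl⟩), by rw [hoop_e v]; simp [h]⟩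
        · rcases ht with rfl | rfl | rfl | rfl
          · exact ⟨edgeCard (v, π v), (hS _).2 (Or.inl ⟨v, rfl⟩), by rw [hoop_e v]; simp [h]⟩
          · exact ⟨fCard v 3, (hS _).2 (Or.inr ⟨v, 3, by omega, rfl⟩), by rw [hoop_f v 3 (by omega)]; simp [h]⟩
          · exact ⟨fCard v 2, (hS _).2 (Or.inr ⟨v, 2, by omega, rfl⟩), by rw [hoop_f v 2 (by omega)]; simp [h]⟩
          · exact ⟨fCard v 1, (hS _).2 (Or.inr ⟨v, 1, by omega, rfl⟩), by rw [hoop_f v 1 (by omega)]; simp [h]⟩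
      · -- uniqueness
        intro c hc c' hc' hpc hpc'
        rcases (hS c).1 hc with ⟨w, rfl⟩ | ⟨u, j, hj, rfl⟩ <;>
          rcases (hS c').1 hc' with ⟨w', rfl⟩ | ⟨u', j', hj', rfl⟩
        · rw [hoop_e] at hpc hpc'
          have hr1 : w = v := congrArg Prod.fst hpc
          have hr2 : w' = v := congrArg Prod.fst hpc'
          rw [hr1, hr2]
        · rw [hoop_e] at hpc; rw [hoop_f u' j' hj'] at hpc'
          exfalso
          have hr1 : w = v := congrArg Prod.fst hpc
          have hr2 : u' = v := congrArg Prod.fst hpc'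
          have hc1 : (if χ w then 4 else 1) = t := congrArg Prod.snd hpc
          have hc2 : (if χ u' then j' else 5 - j') = t := congrArg Prod.snd hpc'
          rw [hr1] at hc1; rw [hr2] at hc2
          by_cases h : χ v <;> simp [h] at hc1 hc2 <;> omega
        · rw [hoop_e] at hpc'; rw [hoop_f u j hj] at hpc
          exfalso
          have hr1 : u = v := congrArg Prod.fst hpc
          have hr2 : w' = v := congrArg Prod.fst hpc'
          have hc1 : (if χ u then j else 5 - j) = t := congrArg Prod.snd hpc
          have hc2 : (if χ w' then 4 else 1) = t := congrArg Prod.snd hpc'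
          rw [hr1] at hc1; rw [hr2] at hc2
          by_cases h : χ v <;> simp [h] at hc1 hc2 <;> omega
        · rw [hoop_f u j hj] at hpc; rw [hoop_f u' j' hj'] at hpc'
          have hr1 : u = v := congrArg Prod.fst hpc
          have hr2 : u' = v := congrArg Prod.fst hpc'
          have hc1 : (if χ u then j else 5 - j) = t := congrArg Prod.snd hpc
          have hc2 : (if χ u' then j' else 5 - j') = t := congrArg Prod.snd hpc'
          rw [hr1] at hc1; rw [hr2] at hc2
          have : j = j' := by
            by_cases h : χ v <;> simp [h] at hc1 hc2 <;> omega
          rw [hr1, hr2, this]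
    · -- balls
      apply filter_card_one
      · by_cases h : χ v
        · rcases ht with rfl | rfl | rfl | rfl
          · refine ⟨edgeCard (π.symm v, π (π.symm v)), (hS _).2 (Or.inl ⟨π.symm v, rfl⟩), ?_⟩
            rw [ball_e]; simp [hχinv v, h, Equiv.apply_symm_apply]
          · exact ⟨fCard v 1, (hS _).2 (Or.inr ⟨v, 1, by omega, rfl⟩), by rw [ball_f v 1 (by omega)]; simp [h]⟩
          · exact ⟨fCard v 2, (hS _).2 (Or.inr ⟨v, 2, by omega, rfl⟩), by rw [ball_f v 2 (by omega)]; simp [h]⟩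
          · exact ⟨fCard v 3, (hS _).2 (Or.inr ⟨v, 3, by omega, rfl⟩), by rw [ball_f v 3 (by omega)]; simp [h]⟩
        · rcases ht with rfl | rfl | rfl | rfl
          · exact ⟨fCard v 3, (hS _).2 (Or.inr ⟨v, 3, by omega, rfl⟩), by rw [ball_f v 3 (by omega)]; simp [h]⟩
          · exact ⟨fCard v 2, (hS _).2 (Or.inr ⟨v, 2, by omega, rfl⟩), by rw [ball_f v 2 (by omega)]; simp [h]⟩
          · exact ⟨fCard v 1, (hS _).2 (Or.inr ⟨v, 1, by omega, rfl⟩), by rw [ball_f v 1 (by omega)]; simp [h]⟩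
          · refine ⟨edgeCard (π.symm v, π (π.symm v)), (hS _).2 (Or.inl ⟨π.symm v, rfl⟩), ?_⟩
            rw [ball_e]; simp [hχinv v, h, Equiv.apply_symm_apply]
      · intro c hc c' hc' hpc hpc'
        rcases (hS c).1 hc with ⟨w, rfl⟩ | ⟨u, j, hj, rfl⟩ <;>
          rcases (hS c').1 hc' with ⟨w', rfl⟩ | ⟨u', j', hj', rfl⟩
        · rw [ball_e] at hpc hpc'
          have hr1 : π w = v := congrArg Prod.fst hpc
          have hr2 : π w' = v := congrArg Prod.fst hpc'
          have : w = w' := π.injective (hr1.trans hr2.symm)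
          rw [this]
        · rw [ball_e] at hpc; rw [ball_f u' j' hj'] at hpc'
          exfalso
          have hr1 : π w = v := congrArg Prod.fst hpc
          have hr2 : u' = v := congrArg Prod.fst hpc'
          have hc1 : (if χ w then 4 else 1) = t := congrArg Prod.snd hpc
          have hc2 : (if χ u' then j' + 1 else 4 - j') = t := congrArg Prod.snd hpc'
          have hcu : χ u' = !χ w := by rw [hr2, ← hr1, hχ]
          rw [hcu] at hc2
          by_cases h : χ w <;>
            simp [h] at hc1 hc2 <;> omega
        · rw [ball_e] at hpc'; rw [ball_f u j hj] at hpc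
          exfalso
          have hr1 : u = v := congrArg Prod.fst hpc
          have hr2 : π w' = v := congrArg Prod.fst hpc'
          have hc1 : (if χ u then j + 1 else 4 - j) = t := congrArg Prod.snd hpc
          have hc2 : (if χ w' then 4 else 1) = t := congrArg Prod.snd hpc'
          have hcu : χ u = !χ w' := by rw [hr1, ← hr2, hχ]
          rw [hcu] at hc1
          by_cases h : χ w' <;>
            simp [h] at hc1 hc2 <;> omega
        · rw [ball_f u j hj] at hpc; rw [ball_f u' j' hj'] at hpc'
          have hr1 : u = v := congrArg Prod.fst hpc
          have hr2 : u' = v := congrArg Prod.fst hpc'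
          have hc1 : (if χ u then j + 1 else 4 - j) = t := congrArg Prod.snd hpc
          have hc2 : (if χ u' then j' + 1 else 4 - j') = t := congrArg Prod.snd hpc'
          rw [hr1] at hc1; rw [hr2] at hc2
          have : j = j' := by
            by_cases h : χ v <;> simp [h] at hc1 hc2 <;> omega
          rw [hr1, hr2, this]
  · -- cardinality
    have hdisj : Disjoint (Finset.univ.image fun v : V => edgeCard (v, π v))
        ((Finset.univ ×ˢ ({1, 2, 3} : Finset ℕ)).image fun p => fCard p.1 p.2) := by
      rw [Finset.disjoint_left]
      rintro a ha hb2
      simp only [Finset.mem_image, Finset.mem_univ, true_and, Finset.mem_product,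
        Finset.mem_insert, Finset.mem_singleton, Prod.exists] at ha hb2
      obtain ⟨v, rfl⟩ := ha
      obtain ⟨u, j, hj, hfe⟩ := hb2
      have := congrArg (fun c : GCard V => c.2.2) hfe
      simp [edgeCard, fCard] at this
      omega
    have hc1 : (Finset.univ.image fun v : V => edgeCard (v, π v)).card = Fintype.card V := by
      rw [Finset.card_image_of_injective, Finset.card_univ]
      intro v v' h
      simpa [edgeCard, Prod.ext_iff] using h
    have hc2 : (((Finset.univ : Finset V) ×ˢ ({1, 2, 3} : Finset ℕ)).image fun p => fCard p.1 p.2).card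
        = 3 * Fintype.card V := by
      rw [Finset.card_image_of_injective, Finset.card_product, Finset.card_univ]
      · simp [mul_comm]
      · intro p p' h
        have h1 := congrArg (fun c : GCard V => c.1.1) h
        have h2 := congrArg (fun c : GCard V => c.1.2) h
        simp [fCard] at h1 h2
        exact Prod.ext h1 h2
    rw [hSdef, Finset.card_union_of_disjoint hdisj, hc1, hc2]
    ring

end Forward


section Backward
variable {V : Type} [DecidableEq V] [Fintype V]

lemma sum_eq_card_forall_one {ι : Type*} [DecidableEq ι] {t : Finset ι} {f : ι → ℕ}
    (h1 : ∀ i ∈ t, f i ≤ 1) (h2 : ∑ i ∈ t, f i = t.card) : ∀ i ∈ t, f i = 1 := by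
  by_contra hcon
  push_neg at hcon
  obtain ⟨i, hi, hne⟩ := hcon
  have hzero : f i = 0 := by have := h1 i hi; omega
  have hle : ∑ x ∈ t.erase i, f x ≤ (t.erase i).card := by
    calc ∑ x ∈ t.erase i, f x ≤ ∑ _x ∈ t.erase i, 1 :=
          Finset.sum_le_sum fun x hx => h1 x (Finset.mem_of_mem_erase hx)
      _ = (t.erase i).card := by simp
  have hsplit : f i + ∑ x ∈ t.erase i, f x = ∑ x ∈ t, f x := Finset.add_sum_erase t f hi
  have hcard : (t.erase i).card = t.card - 1 := Finset.card_erase_of_mem hi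
  have hpos : 0 < t.card := Finset.card_pos.2 ⟨i, hi⟩
  omega

lemma backward_dir (E : Finset (V × V)) (S : Finset (GCard V)) (hsub : S ⊆ cardSet E)
    (b : GCard V → Bool) (hsw : IsFlipSwishWith S b) (hcard : S.card = 4 * Fintype.card V) :
    ∃ π : Equiv.Perm V, (∀ v : V, (v, π v) ∈ E) ∧ ∃ χ : V → Bool, ∀ v, χ (π v) = !χ v := by
  classical
  set grid : Finset (V × ℕ) := Finset.univ ×ˢ ({1, 2, 3, 4} : Finset ℕ) with hgrid
  have hshape : ∀ c ∈ S, (∃ e ∈ E, c = edgeCard e) ∨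
      (∃ u, ∃ j, (j = 1 ∨ j = 2 ∨ j = 3) ∧ c = fCard u j) :=
    fun c hc => mem_cardSet_iff.1 (hsub hc)
  -- position lemmas
  have hoopPos_e : ∀ u w : V, (placedF b (edgeCard (u, w))).1
      = (u, if b (edgeCard (u, w)) then 4 else 1) := by
    intro u w
    unfold placedF
    cases h : b (edgeCard (u, w)) <;> norm_num [flipCard, edgeCard]
  have ballPos_e : ∀ u w : V, (placedF b (edgeCard (u, w))).2
      = (w, if b (edgeCard (u, w)) then 4 else 1) := by
    intro u w
    unfold placedF
    cases h : b (edgeCard (u, w)) <;> norm_num [flipCard, edgeCard]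
  have hoopPos_f : ∀ (u : V) (j : ℕ), (placedF b (fCard u j)).1
      = (u, if b (fCard u j) then 5 - j else j) := by
    intro u j
    unfold placedF
    cases h : b (fCard u j) <;> norm_num [flipCard, fCard]
  have ballPos_f : ∀ (u : V) (j : ℕ), (j = 1 ∨ j = 2 ∨ j = 3) → (placedF b (fCard u j)).2
      = (u, if b (fCard u j) then 4 - j else j + 1) := by
    intro u j hj
    have h54 : 5 - (j + 1) = 4 - j := by omega
    unfold placedF
    cases h : b (fCard u j) <;> norm_num [flipCard, fCard, h54]
  -- all placed positions are in the grid
  have hoopIn : ∀ c ∈ S, (placedF b c).1 ∈ grid := by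
    intro c hc
    rcases hshape c hc with ⟨⟨e1, e2⟩, heE, rfl⟩ | ⟨u, j, hj, rfl⟩
    · rw [hoopPos_e]
      rw [hgrid, Finset.mem_product]
      refine ⟨Finset.mem_univ _, ?_⟩
      by_cases h : b (edgeCard (e1, e2)) <;> simp [h]
    · rw [hoopPos_f]
      rw [hgrid, Finset.mem_product]
      refine ⟨Finset.mem_univ _, ?_⟩
      by_cases h : b (fCard u j) <;> simp [h] <;> omega
  have ballIn : ∀ c ∈ S, (placedF b c).2 ∈ grid := by
    intro c hc
    rcases hshape c hc with ⟨⟨e1, e2⟩, heE, rfl⟩ | ⟨u, j, hj, rfl⟩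
    · rw [ballPos_e]
      rw [hgrid, Finset.mem_product]
      refine ⟨Finset.mem_univ _, ?_⟩
      by_cases h : b (edgeCard (e1, e2)) <;> simp [h]
    · rw [ballPos_f u j hj]
      rw [hgrid, Finset.mem_product]
      refine ⟨Finset.mem_univ _, ?_⟩
      by_cases h : b (fCard u j) <;> simp [h] <;> omega
  have hgridcard : grid.card = 4 * Fintype.card V := by
    rw [hgrid, Finset.card_product, Finset.card_univ]
    norm_num [mul_comm]
  -- every grid point has exactly one hoop and one ball
  have honeH : ∀ x ∈ grid, (S.filter fun c => (placedF b c).1 = x).card = 1 := by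
    apply sum_eq_card_forall_one
    · intro x hx
      rcases hsw x hx with ⟨h0, -⟩ | ⟨h1, -⟩ <;> omega
    · rw [← Finset.card_eq_sum_card_fiberwise hoopIn, hcard, hgridcard]
  have honeB : ∀ x ∈ grid, (S.filter fun c => (placedF b c).2 = x).card = 1 := by
    apply sum_eq_card_forall_one
    · intro x hx
      rcases hsw x hx with ⟨-, h0⟩ | ⟨-, h1⟩ <;> omega
    · rw [← Finset.card_eq_sum_card_fiberwise ballIn, hcard, hgridcard]
  have hmemgrid : ∀ (v : V) (t : ℕ), (t = 1 ∨ t = 2 ∨ t = 3 ∨ t = 4) → ((v, t) ∈ grid) := by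
    intro v t ht
    rw [hgrid, Finset.mem_product]
    exact ⟨Finset.mem_univ _, by rcases ht with rfl | rfl | rfl | rfl <;> simp⟩
  have hoopEx : ∀ (v : V) (t : ℕ), (t = 1 ∨ t = 2 ∨ t = 3 ∨ t = 4) →
      ∃ c ∈ S, (placedF b c).1 = (v, t) := by
    intro v t ht
    have h1 := honeH (v, t) (hmemgrid v t ht)
    have hpos : 0 < (S.filter fun c => (placedF b c).1 = (v, t)).card := by omega
    obtain ⟨c, hc⟩ := Finset.card_pos.1 hpos
    rw [Finset.mem_filter] at hc
    exact ⟨c, hc.1, hc.2⟩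
  have ballEx : ∀ (v : V) (t : ℕ), (t = 1 ∨ t = 2 ∨ t = 3 ∨ t = 4) →
      ∃ c ∈ S, (placedF b c).2 = (v, t) := by
    intro v t ht
    have h1 := honeB (v, t) (hmemgrid v t ht)
    have hpos : 0 < (S.filter fun c => (placedF b c).2 = (v, t)).card := by omega
    obtain ⟨c, hc⟩ := Finset.card_pos.1 hpos
    rw [Finset.mem_filter] at hc
    exact ⟨c, hc.1, hc.2⟩
  have hoopUniq : ∀ (v : V) (t : ℕ), (t = 1 ∨ t = 2 ∨ t = 3 ∨ t = 4) →
      ∀ c ∈ S, ∀ c' ∈ S, (placedF b c).1 = (v, t) → (placedF b c').1 = (v, t) → c = c' := by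
    intro v t ht c hc c' hc' h1 h2
    have := honeH (v, t) (hmemgrid v t ht)
    exact Finset.card_le_one.1 (le_of_eq this) c
      (Finset.mem_filter.2 ⟨hc, h1⟩) c' (Finset.mem_filter.2 ⟨hc', h2⟩)
  have ballUniq : ∀ (v : V) (t : ℕ), (t = 1 ∨ t = 2 ∨ t = 3 ∨ t = 4) →
      ∀ c ∈ S, ∀ c' ∈ S, (placedF b c).2 = (v, t) → (placedF b c').2 = (v, t) → c = c' := by
    intro v t ht c hc c' hc' h1 h2
    have := honeB (v, t) (hmemgrid v t ht)
    exact Finset.card_le_one.1 (le_of_eq this) c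
      (Finset.mem_filter.2 ⟨hc, h1⟩) c' (Finset.mem_filter.2 ⟨hc', h2⟩)
  -- case analysis for a card having a hoop/ball at a given point
  have hoopCases : ∀ c ∈ S, ∀ (v : V) (t : ℕ), (placedF b c).1 = (v, t) →
      (∃ w, (v, w) ∈ E ∧ c = edgeCard (v, w) ∧
        ((b c = false ∧ t = 1) ∨ (b c = true ∧ t = 4))) ∨
      (∃ j, (j = 1 ∨ j = 2 ∨ j = 3) ∧ c = fCard v j ∧
        ((b c = false ∧ t = j) ∨ (b c = true ∧ t = 5 - j))) := by
    intro c hc v t hpc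
    rcases hshape c hc with ⟨⟨e1, e2⟩, heE, rfl⟩ | ⟨u, j, hj, rfl⟩
    · rw [hoopPos_e] at hpc
      obtain rfl : e1 = v := congrArg Prod.fst hpc
      have hcol : (if b (edgeCard (e1, e2)) then 4 else 1) = t := congrArg Prod.snd hpc
      refine Or.inl ⟨e2, heE, rfl, ?_⟩
      by_cases h : b (edgeCard (e1, e2)) <;> simp [h] at hcol ⊢ <;> omega
    · rw [hoopPos_f] at hpc
      obtain rfl : u = v := congrArg Prod.fst hpc
      have hcol : (if b (fCard u j) then 5 - j else j) = t := congrArg Prod.snd hpc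
      refine Or.inr ⟨j, hj, rfl, ?_⟩
      by_cases h : b (fCard u j) <;> simp [h] at hcol ⊢ <;> omega
  have ballCases : ∀ c ∈ S, ∀ (v : V) (t : ℕ), (placedF b c).2 = (v, t) →
      (∃ u, (u, v) ∈ E ∧ c = edgeCard (u, v) ∧
        ((b c = false ∧ t = 1) ∨ (b c = true ∧ t = 4))) ∨
      (∃ j, (j = 1 ∨ j = 2 ∨ j = 3) ∧ c = fCard v j ∧
        ((b c = false ∧ t = j + 1) ∨ (b c = true ∧ t = 4 - j))) := by
    intro c hc v t hpc
    rcases hshape c hc with ⟨⟨e1, e2⟩, heE, rfl⟩ | ⟨u, j, hj, rfl⟩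
    · rw [ballPos_e] at hpc
      obtain rfl : e2 = v := congrArg Prod.fst hpc
      have hcol : (if b (edgeCard (e1, e2)) then 4 else 1) = t := congrArg Prod.snd hpc
      refine Or.inl ⟨e1, heE, rfl, ?_⟩
      by_cases h : b (edgeCard (e1, e2)) <;> simp [h] at hcol ⊢ <;> omega
    · rw [ballPos_f u j hj] at hpc
      obtain rfl : u = v := congrArg Prod.fst hpc
      have hcol : (if b (fCard u j) then 4 - j else j + 1) = t := congrArg Prod.snd hpc
      refine Or.inr ⟨j, hj, rfl, ?_⟩
      by_cases h : b (fCard u j) <;> simp [h] at hcol ⊢ <;> omega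
  have edge_ne_f : ∀ (u w x : V) (j : ℕ), (j = 1 ∨ j = 2 ∨ j = 3) →
      edgeCard (u, w) ≠ fCard x j := by
    intro u w x j hj h
    have := congrArg (fun c : GCard V => c.2.2) h
    simp [edgeCard, fCard] at this
    omega
  -- the f-card at column 2 of each row is in S
  have hf2 : ∀ v : V, fCard v 2 ∈ S := by
    intro v
    obtain ⟨c, hc, hpc⟩ := hoopEx v 2 (by omega)
    rcases hoopCases c hc v 2 hpc with ⟨w, hwE, rfl, hor⟩ | ⟨j, hj, rfl, hor⟩
    · rcases hor with ⟨-, h⟩ | ⟨-, h⟩ <;> omega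
    · rcases hor with ⟨hb, hj2⟩ | ⟨hb, hj2⟩
      · have : j = 2 := by omega
        rwa [← this]
      · have hj3 : j = 3 := by omega
        subst hj3
        obtain ⟨c', hc', hpc'⟩ := hoopEx v 3 (by omega)
        rcases hoopCases c' hc' v 3 hpc' with ⟨w, hwE, rfl, hor'⟩ | ⟨j', hj', rfl, hor'⟩
        · rcases hor' with ⟨-, h⟩ | ⟨-, h⟩ <;> omega
        · rcases hor' with ⟨hb', hj2'⟩ | ⟨hb', hj2'⟩
          · have : j' = 3 := by omega
            subst this
            rw [hb'] at hb
            simp at hb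
          · have : j' = 2 := by omega
            subst this
            exact hc'
  -- key structural facts for every vertex
  have key : ∀ v : V,
      (∃ w, (v, w) ∈ E ∧ edgeCard (v, w) ∈ S ∧ b (edgeCard (v, w)) = !(b (fCard v 2))) ∧
      (∀ u, edgeCard (u, v) ∈ S → b (edgeCard (u, v)) = b (fCard v 2)) := by
    intro v
    cases hβ : b (fCard v 2)
    · -- unflipped middle card: row v is in the "U" state
      have A1 : fCard v 3 ∈ S ∧ b (fCard v 3) = false := by
        obtain ⟨c, hc, hpc⟩ := hoopEx v 3 (by omega)
        rcases hoopCases c hc v 3 hpc with ⟨w, hwE, rfl, hor⟩ | ⟨j, hj, rfl, hor⟩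
        · rcases hor with ⟨-, h⟩ | ⟨-, h⟩ <;> omega
        · rcases hor with ⟨hb, hj2⟩ | ⟨hb, hj2⟩
          · have : j = 3 := by omega
            subst this; exact ⟨hc, hb⟩
          · have : j = 2 := by omega
            subst this; rw [hβ] at hb; simp at hb
      have A2 : fCard v 1 ∈ S ∧ b (fCard v 1) = false := by
        obtain ⟨c, hc, hpc⟩ := ballEx v 2 (by omega)
        rcases ballCases c hc v 2 hpc with ⟨u, huE, rfl, hor⟩ | ⟨j, hj, rfl, hor⟩
        · rcases hor with ⟨-, h⟩ | ⟨-, h⟩ <;> omega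
        · rcases hor with ⟨hb, hj2⟩ | ⟨hb, hj2⟩
          · have : j = 1 := by omega
            subst this; exact ⟨hc, hb⟩
          · have : j = 2 := by omega
            subst this; rw [hβ] at hb; simp at hb
      constructor
      · -- out-edge, flipped, from hoop at (v,4)
        obtain ⟨c, hc, hpc⟩ := hoopEx v 4 (by omega)
        rcases hoopCases c hc v 4 hpc with ⟨w, hwE, rfl, hor⟩ | ⟨j, hj, rfl, hor⟩
        · rcases hor with ⟨hb, h⟩ | ⟨hb, h⟩
          · omega
          · exact ⟨w, hwE, hc, by rw [hb]; rfl⟩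
        · exfalso
          rcases hor with ⟨hb, h⟩ | ⟨hb, h⟩
          · omega
          · have : j = 1 := by omega
            subst this; rw [A2.2] at hb; simp at hb
      · -- in-edges are unflipped, by ball uniqueness at (v,4)
        intro u hu
        by_contra hcon
        rw [Bool.not_eq_false] at hcon  -- hcon : b (edgeCard (u,v)) = true
        have hball1 : (placedF b (edgeCard (u, v))).2 = (v, 4) := by
          rw [ballPos_e, hcon]; norm_num
        have hball2 : (placedF b (fCard v 3)).2 = (v, 4) := by
          rw [ballPos_f v 3 (by omega), A1.2]; norm_num
        have := ballUniq v 4 (by omega) _ hu _ A1.1 hball1 hball2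
        exact edge_ne_f u v v 3 (by omega) this
    · -- flipped middle card: row v is in the "F" state
      have B1 : fCard v 3 ∈ S ∧ b (fCard v 3) = true := by
        obtain ⟨c, hc, hpc⟩ := hoopEx v 2 (by omega)
        rcases hoopCases c hc v 2 hpc with ⟨w, hwE, rfl, hor⟩ | ⟨j, hj, rfl, hor⟩
        · rcases hor with ⟨-, h⟩ | ⟨-, h⟩ <;> omega
        · rcases hor with ⟨hb, hj2⟩ | ⟨hb, hj2⟩
          · have : j = 2 := by omega
            subst this; rw [hβ] at hb; simp at hb
          · have : j = 3 := by omega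
            subst this; exact ⟨hc, hb⟩
      have B2 : fCard v 1 ∈ S ∧ b (fCard v 1) = true := by
        obtain ⟨c, hc, hpc⟩ := ballEx v 3 (by omega)
        rcases ballCases c hc v 3 hpc with ⟨u, huE, rfl, hor⟩ | ⟨j, hj, rfl, hor⟩
        · rcases hor with ⟨-, h⟩ | ⟨-, h⟩ <;> omega
        · rcases hor with ⟨hb, hj2⟩ | ⟨hb, hj2⟩
          · have : j = 2 := by omega
            subst this; rw [hβ] at hb; simp at hb
          · have : j = 1 := by omega
            subst this; exact ⟨hc, hb⟩
      constructor
      · -- out-edge, unflipped, from hoop at (v,1)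
        obtain ⟨c, hc, hpc⟩ := hoopEx v 1 (by omega)
        rcases hoopCases c hc v 1 hpc with ⟨w, hwE, rfl, hor⟩ | ⟨j, hj, rfl, hor⟩
        · rcases hor with ⟨hb, h⟩ | ⟨hb, h⟩
          · exact ⟨w, hwE, hc, by rw [hb]; rfl⟩
          · omega
        · exfalso
          rcases hor with ⟨hb, h⟩ | ⟨hb, h⟩
          · have : j = 1 := by omega
            subst this; rw [B2.2] at hb; simp at hb
          · omega
      · -- in-edges are flipped, by ball uniqueness at (v,1)
        intro u hu
        by_contra hcon
        rw [Bool.not_eq_true] at hcon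
        have hball1 : (placedF b (edgeCard (u, v))).2 = (v, 1) := by
          rw [ballPos_e, hcon]; norm_num
        have hball2 : (placedF b (fCard v 3)).2 = (v, 1) := by
          rw [ballPos_f v 3 (by omega), B1.2]; norm_num
        have := ballUniq v 1 (by omega) _ hu _ B1.1 hball1 hball2
        exact edge_ne_f u v v 3 (by omega) this
  -- build the permutation
  choose πf hπE hπS hπb using fun v => (key v).1
  have hinj : Function.Injective πf := by
    intro v v' h
    have h2 : edgeCard (v', πf v) ∈ S := by rw [h]; exact hπS v'
    have hb1 : b (edgeCard (v, πf v)) = b (fCard (πf v) 2) := (key (πf v)).2 v (hπS v)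
    have hb2 : b (edgeCard (v', πf v)) = b (fCard (πf v) 2) := (key (πf v)).2 v' h2
    have hball1 : (placedF b (edgeCard (v, πf v))).2
        = (πf v, if b (fCard (πf v) 2) then 4 else 1) := by rw [ballPos_e, hb1]
    have hball2 : (placedF b (edgeCard (v', πf v))).2
        = (πf v, if b (fCard (πf v) 2) then 4 else 1) := by rw [ballPos_e, hb2]
    have hcc : edgeCard (v, πf v) = edgeCard (v', πf v) := by
      cases hm : b (fCard (πf v) 2)
      · rw [hm] at hball1 hball2
        exact ballUniq (πf v) 1 (by omega) _ (hπS v) _ h2 (by simpa using hball1)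
          (by simpa using hball2)
      · rw [hm] at hball1 hball2
        exact ballUniq (πf v) 4 (by omega) _ (hπS v) _ h2 (by simpa using hball1)
          (by simpa using hball2)
    exact congrArg (fun c : GCard V => c.1.1) hcc
  let π : Equiv.Perm V := Equiv.ofBijective πf (Finite.injective_iff_bijective.1 hinj)
  refine ⟨π, fun v => hπE v, ⟨fun v => !(b (fCard v 2)), ?_⟩⟩
  intro v
  have h1 : b (edgeCard (v, πf v)) = !(b (fCard v 2)) := hπb v
  have h2 : b (edgeCard (v, πf v)) = b (fCard (πf v) 2) := (key (πf v)).2 v (hπS v)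
  have h3 : b (fCard (πf v) 2) = !(b (fCard v 2)) := by rw [← h2, h1]
  show (!(b (fCard (πf v) 2))) = (!(!(b (fCard v 2))))
  rw [h3]

end Backward


theorem stmt3 {V : Type} [DecidableEq V] [Fintype V] [Nonempty V] (E : Finset (V × V)) :
    (∃ F, IsEvenDicycleFactor E F) ↔
    (∃ S ⊆ cardSet E, IsFlipSwish S ∧ S.card = 4 * Fintype.card V) := by
  constructor
  · rintro ⟨F, π, hF, hE, hEven⟩
    obtain ⟨χ, hχ⟩ := coloring_of_allOrbitsEven hEven
    exact forward_dir E π hE χ hχ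
  · rintro ⟨S, hsub, ⟨b, hsw⟩, hcard⟩
    obtain ⟨π, hE, χ, hχ⟩ := backward_dir E S hsub b hsw hcard
    exact ⟨_, π, rfl, hE, allOrbitsEven_of_coloring hχ⟩
end
end

section
/- Let G = (V,E) be a finite directed graph with V nonempty. If F ⊆ E is an even dicycle-factor of G, then the set S = {c_e : e ∈ F} ∪ {f_{v,j} : v ∈ V, j ∈ {1,2,3}} is a swish with horizontal flip allowed (and no rotation) contained in C(G), and |S| = 4|V|. -/
lemma myorbit_card {V : Type} [Fintype V] (π : Equiv.Perm V) (v : V) :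
    Nat.card {u : V | ∃ m : ℤ, (π ^ m) v = u} = Function.minimalPeriod π v := by
  classical
  have hset : {u : V | ∃ m : ℤ, (π ^ m) v = u} = MulAction.orbit (Subgroup.zpowers π) v := by
    ext u
    simp only [Set.mem_setOf_eq, MulAction.mem_orbit_iff]
    constructor
    · rintro ⟨m, hm⟩
      exact ⟨⟨π ^ m, Subgroup.zpow_mem _ (Subgroup.mem_zpowers π) m⟩, hm⟩
    · rintro ⟨⟨g, hg⟩, hgu⟩
      obtain ⟨m, rfl⟩ := Subgroup.mem_zpowers_iff.mp hg
      exact ⟨m, hgu⟩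
  have hsmul : Function.minimalPeriod (π • ·) v = Function.minimalPeriod (⇑π) v := rfl
  rw [hset]
  haveI : Fintype ↥(MulAction.orbit (Subgroup.zpowers π) v) := Fintype.ofFinite _
  rw [Nat.card_eq_fintype_card, ← MulAction.minimalPeriod_eq_card, hsmul]

lemma exists_alternating {V : Type} [Fintype V] (π : Equiv.Perm V)
    (h : AllOrbitsEven π) : ∃ χ : V → Bool, ∀ v : V, χ (π v) = !χ v := by
  classical
  set s : Setoid V := Equiv.Perm.SameCycle.setoid π with hs
  set rep : V → V := fun v => (Quotient.mk s v).out with hrepdef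
  have hsc : ∀ v, π.SameCycle (rep v) v := fun v => Quotient.mk_out v
  have hex : ∀ v : V, ∃ n : ℕ, (π ^ n) (rep v) = v := by
    intro v
    obtain ⟨i, _, hi⟩ := (hsc v).exists_pow_eq'
    exact ⟨i, hi⟩
  have hreppi : ∀ v, rep (π v) = rep v := by
    intro v
    have h1 : Quotient.mk s (π v) = Quotient.mk s v :=
      Quotient.sound (⟨-1, by simp⟩ : π.SameCycle (π v) v)
    simp only [hrepdef, h1]
  refine ⟨fun v => decide (Odd (Nat.find (hex v))), fun v => ?_⟩
  show decide (Odd (Nat.find (hex (π v)))) = !decide (Odd (Nat.find (hex v)))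
  set a := Nat.find (hex v) with hadef
  set b := Nat.find (hex (π v)) with hbdef
  have ha : (π ^ a) (rep v) = v := Nat.find_spec (hex v)
  have hb : (π ^ b) (rep v) = π v := by
    rw [← hreppi v]; exact Nat.find_spec (hex (π v))
  have hsucc : (π ^ (a + 1)) (rep v) = π v := by
    rw [pow_succ']
    simp [Equiv.Perm.mul_apply, ha]
  have hble : b ≤ a + 1 := Nat.find_min' (hex (π v)) (by rw [hreppi]; exact hsucc)
  rcases eq_or_lt_of_le hble with heq | hlt
  · rw [heq]
    rcases Nat.mod_two_eq_zero_or_one a with h6 | h6 <;>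
      simp [Nat.odd_iff, Nat.add_mod, h6]
  · have hb0 : b = 0 := by
      by_contra h0
      have h1 : 1 ≤ b := Nat.one_le_iff_ne_zero.mpr h0
      have h2 : (π ^ (b - 1)) (rep v) = v := by
        have h3 : π ((π ^ (b - 1)) (rep v)) = π v := by
          rw [← Equiv.Perm.mul_apply, ← pow_succ', Nat.sub_add_cancel h1]
          exact hb
        exact π.injective h3
      have := Nat.find_min' (hex v) h2
      omega
    have hrv : rep v = π v := by simpa [hb0] using hb
    set p := Function.minimalPeriod (⇑π) (rep v) with hp
    have hpe : Even p := by
      have := h (rep v)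
      rwa [myorbit_card] at this
    have hppos : 0 < p :=
      Function.minimalPeriod_pos_of_mem_periodicPts
        ⟨orderOf π, orderOf_pos π, by
          show (π ^ orderOf π) (rep v) = rep v
          rw [pow_orderOf_eq_one]; rfl⟩
    have hper : (π ^ p) (rep v) = rep v := Function.isPeriodicPt_minimalPeriod (⇑π) (rep v)
    have h4 : (π ^ (a + 1)) (rep v) = rep v := hsucc.trans hrv.symm
    have hple : p ≤ a + 1 :=
      Function.IsPeriodicPt.minimalPeriod_le (Nat.succ_pos a) h4
    have hap : a ≤ p - 1 := by
      apply Nat.find_min' (hex v)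
      have h5 : π ((π ^ (p - 1)) (rep v)) = π v := by
        rw [← Equiv.Perm.mul_apply, ← pow_succ', Nat.sub_add_cancel hppos, hper, hrv]
      exact π.injective h5
    have hpa : p = a + 1 := by omega
    have hodda : a % 2 = 1 := by
      have h7 : Even (a + 1) := hpa ▸ hpe
      exact Nat.not_even_iff.mp (Nat.even_add_one.mp h7)
    rw [hb0]
    simp [Nat.odd_iff, hodda]

theorem stmt4 {V : Type} [DecidableEq V] [Fintype V] [Nonempty V] (E : Finset (V × V))
    (F : Finset (V × V)) (hF : IsEvenDicycleFactor E F) :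
    (F.image edgeCard ∪
        (Finset.univ ×ˢ ({1, 2, 3} : Finset ℕ)).image (fun p => fCard p.1 p.2)) ⊆ cardSet E ∧
    IsFlipSwish (F.image edgeCard ∪
        (Finset.univ ×ˢ ({1, 2, 3} : Finset ℕ)).image (fun p => fCard p.1 p.2)) ∧
    (F.image edgeCard ∪
        (Finset.univ ×ˢ ({1, 2, 3} : Finset ℕ)).image (fun p => fCard p.1 p.2)).card
      = 4 * Fintype.card V := by
  classical
  obtain ⟨π, hFeq, hFE, hEven⟩ := hF
  obtain ⟨χ, hχ⟩ := exists_alternating π hEven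
  set S := F.image edgeCard ∪
      (Finset.univ ×ˢ ({1, 2, 3} : Finset ℕ)).image (fun p => fCard p.1 p.2) with hSdef
  -- membership characterization
  have hmem : ∀ c : GCard V, c ∈ S ↔
      (∃ u : V, c = edgeCard (u, π u)) ∨
      (∃ w : V, ∃ j : ℕ, (j = 1 ∨ j = 2 ∨ j = 3) ∧ c = fCard w j) := by
    intro c
    rw [hSdef, Finset.mem_union]
    constructor
    · rintro (hc | hc)
      · obtain ⟨e, he, rfl⟩ := Finset.mem_image.mp hc
        rw [hFeq] at he
        obtain ⟨u, -, rfl⟩ := Finset.mem_image.mp he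
        exact Or.inl ⟨u, rfl⟩
      · obtain ⟨p, hp, rfl⟩ := Finset.mem_image.mp hc
        rw [Finset.mem_product] at hp
        refine Or.inr ⟨p.1, p.2, ?_, rfl⟩
        have h2 := hp.2
        simpa using h2
    · rintro (⟨u, rfl⟩ | ⟨w, j, hj, rfl⟩)
      · refine Or.inl (Finset.mem_image.mpr ⟨(u, π u), ?_, rfl⟩)
        rw [hFeq]
        exact Finset.mem_image.mpr ⟨u, Finset.mem_univ u, rfl⟩
      · refine Or.inr (Finset.mem_image.mpr ⟨(w, j), ?_, rfl⟩)
        rw [Finset.mem_product]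
        exact ⟨Finset.mem_univ w, by simpa using hj⟩
  -- cardinality
  have hcard : S.card = 4 * Fintype.card V := by
    have hd : Disjoint (F.image edgeCard)
        ((Finset.univ ×ˢ ({1, 2, 3} : Finset ℕ)).image fun p => fCard p.1 p.2) := by
      rw [Finset.disjoint_left]
      rintro c hc hc'
      obtain ⟨e, -, rfl⟩ := Finset.mem_image.mp hc
      obtain ⟨⟨pv, pj⟩, hp, hpe⟩ := Finset.mem_image.mp hc'
      rw [Finset.mem_product] at hp
      have hp2 : pj = 1 ∨ pj = 2 ∨ pj = 3 := by simpa using hp.2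
      have h1 : pj + 1 = 1 := congrArg (fun c : GCard V => c.2.2) hpe
      omega
    have hinj1 : Function.Injective (edgeCard (V := V)) := by
      intro e1 e2 h12
      simpa [edgeCard, Prod.ext_iff] using h12
    have hinj2 : Function.Injective (fun p : V × ℕ => fCard p.1 p.2) := by
      intro p1 p2 h12
      simpa [fCard, Prod.ext_iff] using h12
    have hinj3 : Function.Injective (fun v : V => (v, π v)) := by
      intro v1 v2 h12
      exact congrArg Prod.fst h12
    rw [hSdef, Finset.card_union_of_disjoint hd,
      Finset.card_image_of_injective _ hinj1,
      Finset.card_image_of_injective _ hinj2, hFeq,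
      Finset.card_image_of_injective _ hinj3, Finset.card_product, Finset.card_univ]
    simp; ring
  -- the flip choice
  set b : GCard V → Bool := fun c => if c.2.2 = 1 then χ c.1.1 else !χ c.1.1 with hbdef
  have pe : ∀ u : V, placedF b (edgeCard (u, π u)) =
      if χ u then ((u, 4), (π u, 4)) else ((u, 1), (π u, 1)) := by
    intro u
    cases h1 : χ u <;> simp [placedF, hbdef, edgeCard, flipCard, h1]
  have pf : ∀ (w : V) (j : ℕ), (j = 1 ∨ j = 2 ∨ j = 3) → placedF b (fCard w j) =
      if χ w then ((w, j), (w, j + 1)) else ((w, 5 - j), (w, 4 - j)) := by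
    intro w j hj
    have hj1 : ¬(j + 1 = 1) := by omega
    have h5 : 5 - (j + 1) = 4 - j := by omega
    cases h1 : χ w <;> simp [placedF, hbdef, fCard, flipCard, hj1, h1, h5] <;> omega
  -- injectivity of the hoop map
  have hinjH : Set.InjOn (fun c => (placedF b c).1) ↑S := by
    intro c1 h1 c2 h2 hcc
    rw [Finset.mem_coe, hmem] at h1 h2
    simp only at hcc
    rcases h1 with ⟨u, rfl⟩ | ⟨w, j, hj, rfl⟩ <;>
      rcases h2 with ⟨u', rfl⟩ | ⟨w', j', hj', rfl⟩
    · rw [pe u, pe u'] at hcc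
      cases h3 : χ u <;> cases h4 : χ u' <;> simp [h3, h4, Prod.ext_iff] at hcc <;>
        simp [hcc]
    · exfalso
      rw [pe u, pf w' j' hj'] at hcc
      cases h3 : χ u <;> cases h4 : χ w' <;> simp [h3, h4, Prod.ext_iff] at hcc <;>
        (obtain ⟨rfl, hcol⟩ := hcc; first | omega | simp_all)
    · exfalso
      rw [pf w j hj, pe u'] at hcc
      cases h3 : χ w <;> cases h4 : χ u' <;> simp [h3, h4, Prod.ext_iff] at hcc <;>
        (obtain ⟨rfl, hcol⟩ := hcc; first | omega | simp_all)
    · rw [pf w j hj, pf w' j' hj'] at hcc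
      cases h3 : χ w <;> cases h4 : χ w' <;> simp [h3, h4, Prod.ext_iff] at hcc <;>
        (obtain ⟨rfl, hcol⟩ := hcc;
          first | (rw [show j = j' from by omega]) | simp_all)
  -- injectivity of the ball map
  have hinjB : Set.InjOn (fun c => (placedF b c).2) ↑S := by
    intro c1 h1 c2 h2 hcc
    rw [Finset.mem_coe, hmem] at h1 h2
    simp only at hcc
    rcases h1 with ⟨u, rfl⟩ | ⟨w, j, hj, rfl⟩ <;>
      rcases h2 with ⟨u', rfl⟩ | ⟨w', j', hj', rfl⟩
    · rw [pe u, pe u'] at hcc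
      cases h3 : χ u <;> cases h4 : χ u' <;> simp [h3, h4, Prod.ext_iff] at hcc <;>
        simp [hcc]
    · exfalso
      rw [pe u, pf w' j' hj'] at hcc
      cases h3 : χ u <;> cases h4 : χ w' <;> simp [h3, h4, Prod.ext_iff] at hcc <;>
        (obtain ⟨rfl, hcol⟩ := hcc; first | omega | simp_all [hχ])
    · exfalso
      rw [pf w j hj, pe u'] at hcc
      cases h3 : χ w <;> cases h4 : χ u' <;> simp [h3, h4, Prod.ext_iff] at hcc <;>
        (obtain ⟨rfl, hcol⟩ := hcc; first | omega | simp_all [hχ])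
    · rw [pf w j hj, pf w' j' hj'] at hcc
      cases h3 : χ w <;> cases h4 : χ w' <;> simp [h3, h4, Prod.ext_iff] at hcc <;>
        (obtain ⟨rfl, hcol⟩ := hcc;
          first | (rw [show j = j' from by omega]) | simp_all)
  -- images land in the grid
  have hgrid4 : (Finset.univ ×ˢ ({1, 2, 3, 4} : Finset ℕ) : Finset (V × ℕ)).card
      = 4 * Fintype.card V := by
    rw [Finset.card_product, Finset.card_univ]
    simp; ring
  have hsubH : ∀ c ∈ S, (placedF b c).1 ∈
      (Finset.univ ×ˢ ({1, 2, 3, 4} : Finset ℕ) : Finset (V × ℕ)) := by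
    intro c hc
    rw [hmem] at hc
    rcases hc with ⟨u, rfl⟩ | ⟨w, j, hj, rfl⟩
    · rw [pe u]; cases h1 : χ u <;> simp [Finset.mem_product]
    · rw [pf w j hj]; cases h1 : χ w <;> simp [Finset.mem_product] <;> omega
  have hsubB : ∀ c ∈ S, (placedF b c).2 ∈
      (Finset.univ ×ˢ ({1, 2, 3, 4} : Finset ℕ) : Finset (V × ℕ)) := by
    intro c hc
    rw [hmem] at hc
    rcases hc with ⟨u, rfl⟩ | ⟨w, j, hj, rfl⟩
    · rw [pe u]; cases h1 : χ u <;> simp [Finset.mem_product]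
    · rw [pf w j hj]; cases h1 : χ w <;> simp [Finset.mem_product] <;> omega
  -- image equalities
  have himgH : S.image (fun c => (placedF b c).1)
      = Finset.univ ×ˢ ({1, 2, 3, 4} : Finset ℕ) := by
    apply Finset.eq_of_subset_of_card_le
    · intro x hx
      obtain ⟨c, hc, rfl⟩ := Finset.mem_image.mp hx
      exact hsubH c hc
    · rw [Finset.card_image_of_injOn hinjH, hcard, hgrid4]
  have himgB : S.image (fun c => (placedF b c).2)
      = Finset.univ ×ˢ ({1, 2, 3, 4} : Finset ℕ) := by
    apply Finset.eq_of_subset_of_card_le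
    · intro x hx
      obtain ⟨c, hc, rfl⟩ := Finset.mem_image.mp hx
      exact hsubB c hc
    · rw [Finset.card_image_of_injOn hinjB, hcard, hgrid4]
  -- filter counts
  have hfil : ∀ (f : GCard V → V × ℕ), Set.InjOn f ↑S →
      S.image f = Finset.univ ×ˢ ({1, 2, 3, 4} : Finset ℕ) →
      ∀ x ∈ (Finset.univ ×ˢ ({1, 2, 3, 4} : Finset ℕ) : Finset (V × ℕ)),
        (S.filter fun c => f c = x).card = 1 := by
    intro f hinj himg x hx
    rw [← himg] at hx
    obtain ⟨c0, hc0, hc0x⟩ := Finset.mem_image.mp hx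
    rw [Finset.card_eq_one]
    refine ⟨c0, ?_⟩
    ext c
    simp only [Finset.mem_filter, Finset.mem_singleton]
    constructor
    · rintro ⟨hcS, hcx⟩
      exact hinj (Finset.mem_coe.mpr hcS) (Finset.mem_coe.mpr hc0) (by rw [hcx, hc0x])
    · rintro rfl
      exact ⟨hc0, hc0x⟩
  refine ⟨?_, ⟨b, ?_⟩, hcard⟩
  · rw [hSdef]
    apply Finset.union_subset_union _ (le_refl _)
    apply Finset.image_subset_image
    rw [hFeq]
    intro e he
    simp only [Finset.mem_image, Finset.mem_univ, true_and] at he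
    obtain ⟨u, rfl⟩ := he
    exact hFE u
  · intro x hx
    right
    exact ⟨hfil _ hinjH himgH x hx, hfil _ hinjB himgB x hx⟩
end

section
/- Let G = (V,E) be a finite directed graph with V nonempty. If S ⊆ C(G) is a swish of size 4|V| with horizontal flip allowed (and no rotation), then F = {e ∈ E : c_e ∈ S} is an even dicycle-factor of G. -/
section Aux
set_option linter.unusedSectionVars false
variable {V : Type} [DecidableEq V] [Fintype V]

lemma edgeCard_ne_fCard (e : V × V) (v : V) (j : ℕ) : edgeCard e ≠ fCard v j := by
  simp only [edgeCard, fCard, ne_eq, Prod.mk.injEq]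
  rintro ⟨⟨-, h1⟩, -, h2⟩; omega

lemma edgeCard_inj {e e' : V × V} (h : edgeCard e = edgeCard e') : e = e' := by
  simp only [edgeCard, Prod.mk.injEq] at h
  exact Prod.ext h.1.1 h.2.1

lemma fCard_inj {v w : V} {j k : ℕ} (h : fCard v j = fCard w k) : v = w ∧ j = k := by
  simp only [fCard, Prod.mk.injEq] at h
  exact ⟨h.1.1, h.1.2⟩

lemma edgeCard_mem_cardSet {E : Finset (V × V)} {e : V × V} (h : edgeCard e ∈ cardSet E) :
    e ∈ E := by
  rw [cardSet, Finset.mem_union] at h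
  rcases h with h | h
  · obtain ⟨e', he', heq⟩ := Finset.mem_image.mp h
    rwa [edgeCard_inj heq] at he'
  · obtain ⟨⟨x, j⟩, -, heq⟩ := Finset.mem_image.mp h
    exact absurd heq.symm (edgeCard_ne_fCard _ _ _)

lemma hoop_classify {E : Finset (V × V)} {b : GCard V → Bool} {c : GCard V}
    (hc : c ∈ cardSet E) (v : V) (k : ℕ) (h : (placedF b c).1 = (v, k)) :
    (k = 1 ∧ b c = false ∧ ((∃ w, c = edgeCard (v, w)) ∨ c = fCard v 1)) ∨
    (k = 4 ∧ b c = true  ∧ ((∃ w, c = edgeCard (v, w)) ∨ c = fCard v 1)) ∨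
    (k = 2 ∧ ((b c = false ∧ c = fCard v 2) ∨ (b c = true ∧ c = fCard v 3))) ∨
    (k = 3 ∧ ((b c = false ∧ c = fCard v 3) ∨ (b c = true ∧ c = fCard v 2))) := by
  rw [cardSet, Finset.mem_union] at hc
  rcases hc with hc | hc
  · obtain ⟨⟨u, w⟩, he, rfl⟩ := Finset.mem_image.mp hc
    unfold placedF at h
    split at h <;> rename_i hbe
    · simp only [edgeCard, flipCard, Prod.mk.injEq, Nat.reduceSub] at h
      obtain ⟨rfl, rfl⟩ := h
      exact Or.inr (Or.inl ⟨rfl, hbe, Or.inl ⟨w, rfl⟩⟩)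
    · rw [Bool.not_eq_true] at hbe
      simp only [edgeCard, Prod.mk.injEq] at h
      obtain ⟨rfl, rfl⟩ := h
      exact Or.inl ⟨rfl, hbe, Or.inl ⟨w, rfl⟩⟩
  · obtain ⟨⟨x, j⟩, hmem, rfl⟩ := Finset.mem_image.mp hc
    simp only [Finset.mem_product, Finset.mem_univ, true_and, Finset.mem_insert,
      Finset.mem_singleton] at hmem
    rcases hmem with rfl | rfl | rfl <;>
        [skip; skip; skip] <;> (unfold placedF at h; split at h <;> rename_i hbj) <;>
        [skip; rw [Bool.not_eq_true] at hbj; skip; rw [Bool.not_eq_true] at hbj;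
         skip; rw [Bool.not_eq_true] at hbj] <;>
      simp only [fCard, flipCard, Prod.mk.injEq, Nat.reduceSub, Nat.reduceAdd] at h <;>
      obtain ⟨rfl, rfl⟩ := h
    · exact Or.inr (Or.inl ⟨rfl, hbj, Or.inr rfl⟩)
    · exact Or.inl ⟨rfl, hbj, Or.inr rfl⟩
    · exact Or.inr (Or.inr (Or.inr ⟨rfl, Or.inr ⟨hbj, rfl⟩⟩))
    · exact Or.inr (Or.inr (Or.inl ⟨rfl, Or.inl ⟨hbj, rfl⟩⟩))
    · exact Or.inr (Or.inr (Or.inl ⟨rfl, Or.inr ⟨hbj, rfl⟩⟩))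
    · exact Or.inr (Or.inr (Or.inr ⟨rfl, Or.inl ⟨hbj, rfl⟩⟩))

lemma ball_classify {E : Finset (V × V)} {b : GCard V → Bool} {c : GCard V}
    (hc : c ∈ cardSet E) (v : V) (k : ℕ) (h : (placedF b c).2 = (v, k)) :
    (k = 1 ∧ ((b c = false ∧ ∃ u, c = edgeCard (u, v)) ∨ (b c = true ∧ c = fCard v 3))) ∨
    (k = 4 ∧ ((b c = true ∧ ∃ u, c = edgeCard (u, v)) ∨ (b c = false ∧ c = fCard v 3))) ∨
    (k = 2 ∧ ((b c = false ∧ c = fCard v 1) ∨ (b c = true ∧ c = fCard v 2))) ∨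
    (k = 3 ∧ ((b c = false ∧ c = fCard v 2) ∨ (b c = true ∧ c = fCard v 1))) := by
  rw [cardSet, Finset.mem_union] at hc
  rcases hc with hc | hc
  · obtain ⟨⟨u, w⟩, he, rfl⟩ := Finset.mem_image.mp hc
    unfold placedF at h
    split at h <;> rename_i hbe
    · simp only [edgeCard, flipCard, Prod.mk.injEq, Nat.reduceSub] at h
      obtain ⟨rfl, rfl⟩ := h
      exact Or.inr (Or.inl ⟨rfl, Or.inl ⟨hbe, u, rfl⟩⟩)
    · rw [Bool.not_eq_true] at hbe
      simp only [edgeCard, Prod.mk.injEq] at h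
      obtain ⟨rfl, rfl⟩ := h
      exact Or.inl ⟨rfl, Or.inl ⟨hbe, u, rfl⟩⟩
  · obtain ⟨⟨x, j⟩, hmem, rfl⟩ := Finset.mem_image.mp hc
    simp only [Finset.mem_product, Finset.mem_univ, true_and, Finset.mem_insert,
      Finset.mem_singleton] at hmem
    rcases hmem with rfl | rfl | rfl <;>
        [skip; skip; skip] <;> (unfold placedF at h; split at h <;> rename_i hbj) <;>
        [skip; rw [Bool.not_eq_true] at hbj; skip; rw [Bool.not_eq_true] at hbj;
         skip; rw [Bool.not_eq_true] at hbj] <;>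
      simp only [fCard, flipCard, Prod.mk.injEq, Nat.reduceSub, Nat.reduceAdd] at h <;>
      obtain ⟨rfl, rfl⟩ := h
    · exact Or.inr (Or.inr (Or.inr ⟨rfl, Or.inr ⟨hbj, rfl⟩⟩))
    · exact Or.inr (Or.inr (Or.inl ⟨rfl, Or.inl ⟨hbj, rfl⟩⟩))
    · exact Or.inr (Or.inr (Or.inl ⟨rfl, Or.inr ⟨hbj, rfl⟩⟩))
    · exact Or.inr (Or.inr (Or.inr ⟨rfl, Or.inl ⟨hbj, rfl⟩⟩))
    · exact Or.inl ⟨rfl, Or.inr ⟨hbj, rfl⟩⟩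
    · exact Or.inr (Or.inl ⟨rfl, Or.inr ⟨hbj, rfl⟩⟩)

lemma filter_card_one_s5 {α : Type*} {s : Finset α} {p : α → Prop} [DecidablePred p]
    (h : (s.filter p).card = 1) : ∃ a, a ∈ s ∧ p a ∧ ∀ a', a' ∈ s → p a' → a' = a := by
  obtain ⟨a, ha⟩ := Finset.card_eq_one.mp h
  have h1 : a ∈ s.filter p := by rw [ha]; exact Finset.mem_singleton_self a
  rw [Finset.mem_filter] at h1
  exact ⟨a, h1.1, h1.2, fun a' h1' h2' =>
    Finset.mem_singleton.mp (ha ▸ Finset.mem_filter.mpr ⟨h1', h2'⟩)⟩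

end Aux

lemma bool_false_or_true (b : Bool) : b = false ∨ b = true := by
  cases b <;> simp

section Main

lemma orbit_even {V : Type} [DecidableEq V] [Fintype V] (π : Equiv.Perm V) (β : V → Bool)
    (hstep : ∀ u, β (π u) = ! β u) (v : V) :
    Even (Nat.card {u : V | ∃ m : ℤ, (π ^ m) v = u}) := by
  classical
  set O : Finset V := Finset.univ.filter (fun u => ∃ m : ℤ, (π ^ m) v = u) with hO
  have hmemO : ∀ u, u ∈ O ↔ ∃ m : ℤ, (π ^ m) v = u := by
    intro u; rw [hO, Finset.mem_filter]; simp
  have hNat : Nat.card {u : V | ∃ m : ℤ, (π ^ m) v = u} = O.card := by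
    have hset : {u : V | ∃ m : ℤ, (π ^ m) v = u} = ↑O := by
      ext u; rw [Finset.mem_coe, hmemO]; rfl
    rw [hset, Nat.card_coe_set_eq, Set.ncard_coe_finset]
  rw [hNat]
  have hclosed : ∀ u ∈ O, π u ∈ O := by
    intro u hu
    obtain ⟨m, hm⟩ := (hmemO u).mp hu
    refine (hmemO _).mpr ⟨m + 1, ?_⟩
    rw [add_comm, zpow_add, zpow_one, Equiv.Perm.mul_apply, hm]
  have hclosed' : ∀ u ∈ O, π⁻¹ u ∈ O := by
    intro u hu
    obtain ⟨m, hm⟩ := (hmemO u).mp hu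
    refine (hmemO _).mpr ⟨-1 + m, ?_⟩
    rw [zpow_add, Equiv.Perm.mul_apply, hm, zpow_neg_one]
  have hsplit := Finset.card_filter_add_card_filter_not
    (s := O) (p := fun u => β u = true)
  have hbij : (O.filter (fun u => β u = true)).card =
      (O.filter (fun u => ¬ (β u = true))).card := by
    apply Finset.card_bij (fun u _ => π u)
    · intro u hu
      rw [Finset.mem_filter] at hu ⊢
      refine ⟨hclosed u hu.1, ?_⟩
      rw [hstep u, hu.2]
      simp
    · intro u1 h1 u2 h2 h
      exact π.injective h
    · intro u hu
      rw [Finset.mem_filter] at hu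
      refine ⟨π⁻¹ u, ?_, (Equiv.apply_symm_apply π u : π (π⁻¹ u) = u)⟩
      rw [Finset.mem_filter]
      refine ⟨hclosed' u hu.1, ?_⟩
      have hs := hstep (π⁻¹ u)
      rw [show π (π⁻¹ u) = u from Equiv.apply_symm_apply π u] at hs
      rcases bool_false_or_true (β (π⁻¹ u)) with h | h
      · rw [h] at hs; simp at hs; exact absurd hs hu.2
      · exact h
  rw [← hsplit, hbij]
  exact ⟨_, rfl⟩

end Main

theorem stmt5 {V : Type} [DecidableEq V] [Fintype V] [Nonempty V] (E : Finset (V × V))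
    (S : Finset (GCard V)) (hSC : S ⊆ cardSet E) (hsw : IsFlipSwish S)
    (hcard : S.card = 4 * Fintype.card V) :
    IsEvenDicycleFactor E (E.filter fun e => edgeCard e ∈ S) := by
  classical
  obtain ⟨b, hb⟩ := hsw
  have hg : ∀ (v : V) (k : ℕ), k = 1 ∨ k = 2 ∨ k = 3 ∨ k = 4 →
      (v, k) ∈ (Finset.univ ×ˢ ({1,2,3,4} : Finset ℕ) : Finset (V × ℕ)) := by
    intro v k hk
    refine Finset.mem_product.mpr ⟨Finset.mem_univ _, ?_⟩
    simp only [Finset.mem_insert, Finset.mem_singleton]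
    exact hk
  have hmem1 : ∀ c ∈ S, (placedF b c).1 ∈
      (Finset.univ ×ˢ ({1,2,3,4} : Finset ℕ) : Finset (V × ℕ)) := by
    intro c hc
    rcases hoop_classify (hSC hc) (placedF b c).1.1 (placedF b c).1.2 rfl with
      ⟨h1, -⟩ | ⟨h1, -⟩ | ⟨h1, -⟩ | ⟨h1, -⟩ <;>
      exact hg (placedF b c).1.1 (placedF b c).1.2 (by omega)
  have hmem2 : ∀ c ∈ S, (placedF b c).2 ∈
      (Finset.univ ×ˢ ({1,2,3,4} : Finset ℕ) : Finset (V × ℕ)) := by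
    intro c hc
    rcases ball_classify (hSC hc) (placedF b c).2.1 (placedF b c).2.2 rfl with
      ⟨h1, -⟩ | ⟨h1, -⟩ | ⟨h1, -⟩ | ⟨h1, -⟩ <;>
      exact hg (placedF b c).2.1 (placedF b c).2.2 (by omega)
  have hgcard : (Finset.univ ×ˢ ({1,2,3,4} : Finset ℕ) : Finset (V × ℕ)).card
      = 4 * Fintype.card V := by
    have h4 : ({1,2,3,4} : Finset ℕ).card = 4 := by decide
    rw [Finset.card_product, Finset.card_univ, h4, mul_comm]
  have key1 : ∀ x ∈ (Finset.univ ×ˢ ({1,2,3,4} : Finset ℕ) : Finset (V × ℕ)),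
      (S.filter fun c => (placedF b c).1 = x).card = 1 := by
    have hsum := Finset.card_eq_sum_card_fiberwise hmem1
    have hle : ∀ x ∈ (Finset.univ ×ˢ ({1,2,3,4} : Finset ℕ) : Finset (V × ℕ)),
        (S.filter fun c => (placedF b c).1 = x).card ≤ 1 := by
      intro x hx
      rcases hb x hx with ⟨h, -⟩ | ⟨h, -⟩ <;> omega
    have heq : (∑ x ∈ (Finset.univ ×ˢ ({1,2,3,4} : Finset ℕ) : Finset (V × ℕ)),
        (S.filter fun c => (placedF b c).1 = x).card)
        = ∑ _x ∈ (Finset.univ ×ˢ ({1,2,3,4} : Finset ℕ) : Finset (V × ℕ)), 1 := by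
      rw [← hsum, hcard, Finset.sum_const, smul_eq_mul, mul_one, hgcard]
    exact (Finset.sum_eq_sum_iff_of_le hle).mp heq
  have key2 : ∀ x ∈ (Finset.univ ×ˢ ({1,2,3,4} : Finset ℕ) : Finset (V × ℕ)),
      (S.filter fun c => (placedF b c).2 = x).card = 1 := by
    have hsum := Finset.card_eq_sum_card_fiberwise hmem2
    have hle : ∀ x ∈ (Finset.univ ×ˢ ({1,2,3,4} : Finset ℕ) : Finset (V × ℕ)),
        (S.filter fun c => (placedF b c).2 = x).card ≤ 1 := by
      intro x hx
      rcases hb x hx with ⟨-, h⟩ | ⟨-, h⟩ <;> omega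
    have heq : (∑ x ∈ (Finset.univ ×ˢ ({1,2,3,4} : Finset ℕ) : Finset (V × ℕ)),
        (S.filter fun c => (placedF b c).2 = x).card)
        = ∑ _x ∈ (Finset.univ ×ˢ ({1,2,3,4} : Finset ℕ) : Finset (V × ℕ)), 1 := by
      rw [← hsum, hcard, Finset.sum_const, smul_eq_mul, mul_one, hgcard]
    exact (Finset.sum_eq_sum_iff_of_le hle).mp heq
  have exHoop : ∀ (v : V) (k : ℕ), k = 1 ∨ k = 2 ∨ k = 3 ∨ k = 4 →
      ∃ c, c ∈ S ∧ (placedF b c).1 = (v, k) ∧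
        ∀ c', c' ∈ S → (placedF b c').1 = (v, k) → c' = c :=
    fun v k hk => filter_card_one_s5 (key1 (v, k) (hg v k hk))
  have exBall : ∀ (v : V) (k : ℕ), k = 1 ∨ k = 2 ∨ k = 3 ∨ k = 4 →
      ∃ c, c ∈ S ∧ (placedF b c).2 = (v, k) ∧
        ∀ c', c' ∈ S → (placedF b c').2 = (v, k) → c' = c :=
    fun v k hk => filter_card_one_s5 (key2 (v, k) (hg v k hk))
  -- all three f-cards are in S for every row, with equal flip bits
  have fstep : ∀ v : V, fCard v 1 ∈ S ∧ fCard v 2 ∈ S ∧ fCard v 3 ∈ S ∧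
      b (fCard v 2) = b (fCard v 1) ∧ b (fCard v 3) = b (fCard v 1) := by
    intro v
    obtain ⟨c2, hc2S, hc2, -⟩ := exHoop v 2 (by omega)
    obtain ⟨c3, hc3S, hc3, -⟩ := exHoop v 3 (by omega)
    obtain ⟨d2, hd2S, hd2, -⟩ := exBall v 2 (by omega)
    obtain ⟨d3, hd3S, hd3, -⟩ := exBall v 3 (by omega)
    have H2' : (b c2 = false ∧ c2 = fCard v 2) ∨ (b c2 = true ∧ c2 = fCard v 3) := by
      rcases hoop_classify (hSC hc2S) v 2 hc2 with ⟨h,-⟩|⟨h,-⟩|⟨-,h⟩|⟨h,-⟩ <;>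
        first | omega | exact h
    have H3' : (b c3 = false ∧ c3 = fCard v 3) ∨ (b c3 = true ∧ c3 = fCard v 2) := by
      rcases hoop_classify (hSC hc3S) v 3 hc3 with ⟨h,-⟩|⟨h,-⟩|⟨h,-⟩|⟨-,h⟩ <;>
        first | omega | exact h
    have B2' : (b d2 = false ∧ d2 = fCard v 1) ∨ (b d2 = true ∧ d2 = fCard v 2) := by
      rcases ball_classify (hSC hd2S) v 2 hd2 with ⟨h,-⟩|⟨h,-⟩|⟨-,h⟩|⟨h,-⟩ <;>
        first | omega | exact h
    have B3' : (b d3 = false ∧ d3 = fCard v 2) ∨ (b d3 = true ∧ d3 = fCard v 1) := by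
      rcases ball_classify (hSC hd3S) v 3 hd3 with ⟨h,-⟩|⟨h,-⟩|⟨h,-⟩|⟨-,h⟩ <;>
        first | omega | exact h
    have hf23 : fCard v 2 ∈ S ∧ fCard v 3 ∈ S ∧ b (fCard v 3) = b (fCard v 2) := by
      rcases H2' with ⟨hb2, rfl⟩ | ⟨hb2, rfl⟩ <;> rcases H3' with ⟨hb3, rfl⟩ | ⟨hb3, rfl⟩
      · exact ⟨hc2S, hc3S, by rw [hb2, hb3]⟩
      · rw [hb2] at hb3; exact absurd hb3 (by simp)
      · rw [hb2] at hb3; exact absurd hb3 (by simp)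
      · exact ⟨hc3S, hc2S, by rw [hb2, hb3]⟩
    have hf12 : fCard v 1 ∈ S ∧ b (fCard v 2) = b (fCard v 1) := by
      rcases B2' with ⟨hb2, rfl⟩ | ⟨hb2, rfl⟩ <;> rcases B3' with ⟨hb3, rfl⟩ | ⟨hb3, rfl⟩
      · exact ⟨hd2S, by rw [hb2, hb3]⟩
      · rw [hb2] at hb3; exact absurd hb3 (by simp)
      · rw [hb2] at hb3; exact absurd hb3 (by simp)
      · exact ⟨hd3S, by rw [hb2, hb3]⟩
    exact ⟨hf12.1, hf23.1, hf23.2.1, hf12.2, hf23.2.2.trans hf12.2⟩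
  -- unique outgoing edge card
  have outEdge : ∀ v : V, ∃ w : V, (v, w) ∈ E ∧ edgeCard (v, w) ∈ S ∧
      b (edgeCard (v, w)) = !(b (fCard v 1)) ∧
      ∀ w', edgeCard (v, w') ∈ S → w' = w := by
    intro v
    obtain ⟨hf1S, -, -, -, -⟩ := fstep v
    rcases bool_false_or_true (b (fCard v 1)) with hβ | hβ
    · obtain ⟨c1, hc1S, hc1, u1⟩ := exHoop v 1 (by omega)
      obtain ⟨c4, hc4S, hc4, u4⟩ := exHoop v 4 (by omega)
      have hplf1 : (placedF b (fCard v 1)).1 = (v, 1) := by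
        unfold placedF; rw [hβ]; simp [fCard]
      have H4' : b c4 = true ∧ ((∃ w, c4 = edgeCard (v, w)) ∨ c4 = fCard v 1) := by
        rcases hoop_classify (hSC hc4S) v 4 hc4 with ⟨h,-⟩|⟨-,h⟩|⟨h,-⟩|⟨h,-⟩ <;>
          first | omega | exact h
      obtain ⟨hb4, hc4e⟩ := H4'
      have hc4e' : ∃ w, c4 = edgeCard (v, w) := by
        rcases hc4e with h | rfl
        · exact h
        · rw [hβ] at hb4; exact absurd hb4 (by simp)
      obtain ⟨w, rfl⟩ := hc4e'
      refine ⟨w, edgeCard_mem_cardSet (hSC hc4S), hc4S, by simp [hb4, hβ], ?_⟩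
      intro w' hw'S
      rcases bool_false_or_true (b (edgeCard (v, w'))) with hb' | hb'
      · have hpl : (placedF b (edgeCard (v, w'))).1 = (v, 1) := by
          unfold placedF; rw [hb']; simp [edgeCard]
        have h1 := u1 _ hw'S hpl
        have h2 := u1 _ hf1S hplf1
        rw [← h2] at h1
        exact absurd h1 (edgeCard_ne_fCard _ _ _)
      · have hpl : (placedF b (edgeCard (v, w'))).1 = (v, 4) := by
          unfold placedF; rw [hb']; simp [edgeCard, flipCard]
        exact (Prod.ext_iff.mp (edgeCard_inj (u4 _ hw'S hpl))).2
    · obtain ⟨c1, hc1S, hc1, u1⟩ := exHoop v 1 (by omega)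
      obtain ⟨c4, hc4S, hc4, u4⟩ := exHoop v 4 (by omega)
      have hplf1 : (placedF b (fCard v 1)).1 = (v, 4) := by
        unfold placedF; rw [hβ]; simp [fCard, flipCard]
      have H1' : b c1 = false ∧ ((∃ w, c1 = edgeCard (v, w)) ∨ c1 = fCard v 1) := by
        rcases hoop_classify (hSC hc1S) v 1 hc1 with ⟨-,h⟩|⟨h,-⟩|⟨h,-⟩|⟨h,-⟩ <;>
          first | omega | exact h
      obtain ⟨hb1, hc1e⟩ := H1'
      have hc1e' : ∃ w, c1 = edgeCard (v, w) := by
        rcases hc1e with h | rfl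
        · exact h
        · rw [hβ] at hb1; exact absurd hb1 (by simp)
      obtain ⟨w, rfl⟩ := hc1e'
      refine ⟨w, edgeCard_mem_cardSet (hSC hc1S), hc1S, by simp [hb1, hβ], ?_⟩
      intro w' hw'S
      rcases bool_false_or_true (b (edgeCard (v, w'))) with hb' | hb'
      · have hpl : (placedF b (edgeCard (v, w'))).1 = (v, 1) := by
          unfold placedF; rw [hb']; simp [edgeCard]
        exact (Prod.ext_iff.mp (edgeCard_inj (u1 _ hw'S hpl))).2
      · have hpl : (placedF b (edgeCard (v, w'))).1 = (v, 4) := by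
          unfold placedF; rw [hb']; simp [edgeCard, flipCard]
        have h1 := u4 _ hw'S hpl
        have h2 := u4 _ hf1S hplf1
        rw [← h2] at h1
        exact absurd h1 (edgeCard_ne_fCard _ _ _)
  -- unique incoming edge card
  have inEdge : ∀ v : V, ∃ u : V, edgeCard (u, v) ∈ S ∧
      b (edgeCard (u, v)) = b (fCard v 1) ∧ ∀ u', edgeCard (u', v) ∈ S → u' = u := by
    intro v
    obtain ⟨-, -, hf3S, -, hb3⟩ := fstep v
    rcases bool_false_or_true (b (fCard v 1)) with hβ | hβ
    · have hβ3 : b (fCard v 3) = false := by rw [hb3, hβ]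
      obtain ⟨d1, hd1S, hd1, u1⟩ := exBall v 1 (by omega)
      obtain ⟨d4, hd4S, hd4, u4⟩ := exBall v 4 (by omega)
      have hplf3 : (placedF b (fCard v 3)).2 = (v, 4) := by
        unfold placedF; rw [hβ3]; simp [fCard]
      have B1' : (b d1 = false ∧ ∃ u, d1 = edgeCard (u, v)) ∨
          (b d1 = true ∧ d1 = fCard v 3) := by
        rcases ball_classify (hSC hd1S) v 1 hd1 with ⟨-,h⟩|⟨h,-⟩|⟨h,-⟩|⟨h,-⟩ <;>
          first | omega | exact h
      have B1'' : b d1 = false ∧ ∃ u, d1 = edgeCard (u, v) := by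
        rcases B1' with h | ⟨hbt, rfl⟩
        · exact h
        · rw [hβ3] at hbt; exact absurd hbt (by simp)
      obtain ⟨hbd1, u0, rfl⟩ := B1''
      refine ⟨u0, hd1S, by simp [hbd1, hβ], ?_⟩
      intro u' hu'S
      rcases bool_false_or_true (b (edgeCard (u', v))) with hb' | hb'
      · have hpl : (placedF b (edgeCard (u', v))).2 = (v, 1) := by
          unfold placedF; rw [hb']; simp [edgeCard]
        exact (Prod.ext_iff.mp (edgeCard_inj (u1 _ hu'S hpl))).1
      · have hpl : (placedF b (edgeCard (u', v))).2 = (v, 4) := by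
          unfold placedF; rw [hb']; simp [edgeCard, flipCard]
        have h1 := u4 _ hu'S hpl
        have h2 := u4 _ hf3S hplf3
        rw [← h2] at h1
        exact absurd h1 (edgeCard_ne_fCard _ _ _)
    · have hβ3 : b (fCard v 3) = true := by rw [hb3, hβ]
      obtain ⟨d1, hd1S, hd1, u1⟩ := exBall v 1 (by omega)
      obtain ⟨d4, hd4S, hd4, u4⟩ := exBall v 4 (by omega)
      have hplf3 : (placedF b (fCard v 3)).2 = (v, 1) := by
        unfold placedF; rw [hβ3]; simp [fCard, flipCard]
      have B4' : (b d4 = true ∧ ∃ u, d4 = edgeCard (u, v)) ∨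
          (b d4 = false ∧ d4 = fCard v 3) := by
        rcases ball_classify (hSC hd4S) v 4 hd4 with ⟨h,-⟩|⟨-,h⟩|⟨h,-⟩|⟨h,-⟩ <;>
          first | omega | exact h
      have B4'' : b d4 = true ∧ ∃ u, d4 = edgeCard (u, v) := by
        rcases B4' with h | ⟨hbt, rfl⟩
        · exact h
        · rw [hβ3] at hbt; exact absurd hbt (by simp)
      obtain ⟨hbd4, u0, rfl⟩ := B4''
      refine ⟨u0, hd4S, by simp [hbd4, hβ], ?_⟩
      intro u' hu'S
      rcases bool_false_or_true (b (edgeCard (u', v))) with hb' | hb'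
      · have hpl : (placedF b (edgeCard (u', v))).2 = (v, 1) := by
          unfold placedF; rw [hb']; simp [edgeCard]
        have h1 := u1 _ hu'S hpl
        have h2 := u1 _ hf3S hplf3
        rw [← h2] at h1
        exact absurd h1 (edgeCard_ne_fCard _ _ _)
      · have hpl : (placedF b (edgeCard (u', v))).2 = (v, 4) := by
          unfold placedF; rw [hb']; simp [edgeCard, flipCard]
        exact (Prod.ext_iff.mp (edgeCard_inj (u4 _ hu'S hpl))).1
  choose π0 hπE hπS hπb hπu using outEdge
  choose ι hιS hιb hιu using inEdge
  have hinj : Function.Injective π0 := by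
    intro v v' h
    have h1 := hιu (π0 v) v (hπS v)
    have h2 := hιu (π0 v) v' (by rw [h]; exact hπS v')
    exact h1.trans h2.symm
  let π : Equiv.Perm V := Equiv.ofBijective π0 (Finite.injective_iff_bijective.mp hinj)
  have hπ : ∀ v, π v = π0 v := fun v => rfl
  have hstep : ∀ u : V, b (fCard (π0 u) 1) = !(b (fCard u 1)) := by
    intro u
    have h2 := hιu (π0 u) u (hπS u)
    have h3 := hιb (π0 u)
    rw [← h2] at h3
    rw [← h3]
    exact hπb u
  refine ⟨π, ?_, ?_, ?_⟩
  · ext e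
    simp only [Finset.mem_filter, Finset.mem_image, Finset.mem_univ, true_and]
    constructor
    · rintro ⟨heE, heS⟩
      exact ⟨e.1, Prod.ext rfl ((hπ e.1).trans (hπu e.1 e.2 heS).symm)⟩
    · rintro ⟨v, rfl⟩
      exact ⟨hπE v, hπS v⟩
  · intro v
    exact hπE v
  · intro v
    exact orbit_even π (fun u => b (fCard u 1)) (fun u => hstep u) v
end

section
/- Let G = (V,E) be a finite directed graph with V nonempty, and let S ⊆ C(G), together with a choice for each card of S of using it as-is or horizontally flipped, be a swish of size 4|V| with flip allowed (and no rotation). Then f_{v,j} ∈ S for every v ∈ V and j ∈ {1,2,3}, and for each v ∈ V the three cards f_{v,1}, f_{v,2}, f_{v,3} are either all used as-is or all used flipped. -/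
lemma mem_cardSet' {V : Type} [DecidableEq V] [Fintype V] {E : Finset (V × V)} {c : GCard V}
    (h : c ∈ cardSet E) :
    (∃ e, c = edgeCard e) ∨ ∃ u, c = fCard u 1 ∨ c = fCard u 2 ∨ c = fCard u 3 := by
  simp only [cardSet, Finset.mem_union, Finset.mem_image, Finset.mem_product,
    Finset.mem_insert, Finset.mem_singleton] at h
  rcases h with ⟨e, _, he⟩ | ⟨⟨u, j⟩, ⟨_, hj⟩, hc⟩
  · exact Or.inl ⟨e, he.symm⟩
  · exact Or.inr ⟨u, by rcases hj with h | h | h <;> subst h <;> simp [← hc]⟩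

lemma hoop_cases {V : Type} [DecidableEq V] [Fintype V] {E : Finset (V × V)} (b : GCard V → Bool)
    {c : GCard V} (hc : c ∈ cardSet E) {v : V} {k : ℕ} (hk : k = 2 ∨ k = 3)
    (h : (placedF b c).1 = (v, k)) :
    (c = fCard v k ∧ b c = false) ∨ (c = fCard v (5 - k) ∧ b c = true) := by
  have hcl := mem_cardSet' hc
  rcases hk with rfl | rfl <;>
  cases hb : b c <;>
  rcases hcl with ⟨e, rfl⟩ | ⟨u, rfl | rfl | rfl⟩ <;>
  simp_all [placedF, flipCard, edgeCard, fCard, Prod.ext_iff]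

lemma ball_cases {V : Type} [DecidableEq V] [Fintype V] {E : Finset (V × V)} (b : GCard V → Bool)
    {c : GCard V} (hc : c ∈ cardSet E) {v : V} {k : ℕ} (hk : k = 2 ∨ k = 3)
    (h : (placedF b c).2 = (v, k)) :
    (c = fCard v (k - 1) ∧ b c = false) ∨ (c = fCard v (4 - k) ∧ b c = true) := by
  have hcl := mem_cardSet' hc
  rcases hk with rfl | rfl <;>
  cases hb : b c <;>
  rcases hcl with ⟨e, rfl⟩ | ⟨u, rfl | rfl | rfl⟩ <;>
  simp_all [placedF, flipCard, edgeCard, fCard, Prod.ext_iff]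

lemma extract_one {V : Type} [DecidableEq V] {S : Finset (GCard V)}
    (f : GCard V → V × ℕ) (x : V × ℕ) (h : (S.filter fun c => f c = x).card = 1) :
    ∃ a ∈ S, f a = x ∧ ∀ c ∈ S, f c = x → c = a := by
  obtain ⟨a, ha⟩ := Finset.card_eq_one.1 h
  rw [Finset.eq_singleton_iff_unique_mem] at ha
  obtain ⟨ha1, ha2⟩ := ha
  simp only [Finset.mem_filter] at ha1 ha2
  exact ⟨a, ha1.1, ha1.2, fun c hc hfc => ha2 c ⟨hc, hfc⟩⟩

theorem stmt8' {V : Type} [DecidableEq V] [Fintype V] [Nonempty V] (E : Finset (V × V))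
    (S : Finset (GCard V)) (hSC : S ⊆ cardSet E) (b : GCard V → Bool)
    (hsw : ∀ x ∈ (Finset.univ ×ˢ ({1, 2, 3, 4} : Finset ℕ) : Finset (V × ℕ)),
    (((S.filter fun c => (placedF b c).1 = x).card = 0) ∧
      ((S.filter fun c => (placedF b c).2 = x).card = 0)) ∨
    (((S.filter fun c => (placedF b c).1 = x).card = 1) ∧
      ((S.filter fun c => (placedF b c).2 = x).card = 1)))
    (hcard : S.card = 4 * Fintype.card V) :
    ∀ v : V, (∀ j ∈ ({1, 2, 3} : Finset ℕ), fCard v j ∈ S) ∧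
      b (fCard v 1) = b (fCard v 2) ∧ b (fCard v 2) = b (fCard v 3) := by
  classical
  set T : Finset (V × ℕ) := Finset.univ ×ˢ ({1, 2, 3, 4} : Finset ℕ) with hT
  have hmem : ∀ c ∈ S, (placedF b c).1 ∈ T := by
    intro c hc
    have hcl := mem_cardSet' (hSC hc)
    cases hb : b c <;>
    rcases hcl with ⟨e, rfl⟩ | ⟨u, rfl | rfl | rfl⟩ <;>
    simp only [edgeCard, fCard] at hb <;>
    simp [hT, placedF, flipCard, edgeCard, fCard, hb, Finset.mem_product]
  have hsum : ∑ x ∈ T, (S.filter fun c => (placedF b c).1 = x).card = S.card :=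
    (Finset.card_eq_sum_card_fiberwise hmem).symm
  have hTcard : T.card = 4 * Fintype.card V := by
    rw [hT, Finset.card_product]
    simp [mul_comm]
  have hle : ∀ x ∈ T, (S.filter fun c => (placedF b c).1 = x).card ≤ 1 := by
    intro x hx; rcases hsw x hx with ⟨h0, _⟩ | ⟨h1, _⟩ <;> omega
  have heq : ∑ x ∈ T, (S.filter fun c => (placedF b c).1 = x).card = ∑ _x ∈ T, 1 := by
    rw [hsum, hcard, Finset.sum_const, smul_eq_mul, mul_one, hTcard]
  have hone : ∀ x ∈ T, (S.filter fun c => (placedF b c).1 = x).card = 1 :=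
    fun x hx => (Finset.sum_eq_sum_iff_of_le hle).1 heq x hx
  have honeb : ∀ x ∈ T, (S.filter fun c => (placedF b c).2 = x).card = 1 := by
    intro x hx
    rcases hsw x hx with ⟨h0, _⟩ | ⟨_, h1⟩
    · have := hone x hx; omega
    · exact h1
  intro v
  have hv2 : ((v, 2) : V × ℕ) ∈ T := by simp [hT]
  have hv3 : ((v, 3) : V × ℕ) ∈ T := by simp [hT]
  obtain ⟨a, haS, haP, haU⟩ := extract_one _ _ (hone _ hv2)
  obtain ⟨a3, ha3S, ha3P, ha3U⟩ := extract_one _ _ (hone _ hv3)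
  obtain ⟨c2, hc2S, hc2P, hc2U⟩ := extract_one _ _ (honeb _ hv2)
  obtain ⟨c3, hc3S, hc3P, hc3U⟩ := extract_one _ _ (honeb _ hv3)
  have hA := hoop_cases b (hSC haS) (Or.inl rfl) haP
  have hA3 := hoop_cases b (hSC ha3S) (Or.inr rfl) ha3P
  have hB2 := ball_cases b (hSC hc2S) (Or.inl rfl) hc2P
  have hB3 := ball_cases b (hSC hc3S) (Or.inr rfl) hc3P
  norm_num at hA hA3 hB2 hB3
  rcases hA with ⟨rfl, hb2⟩ | ⟨rfl, hb3⟩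
  · -- a = fCard v 2, unflipped
    rcases hB2 with ⟨rfl, hb1⟩ | ⟨h2, hbt⟩
    · rcases hA3 with ⟨rfl, hb3⟩ | ⟨h2, hbt⟩
      · refine ⟨?_, ?_, ?_⟩
        · intro j hj
          fin_cases hj <;> assumption
        · rw [hb1, hb2]
        · rw [hb2, hb3]
      · rw [h2] at hbt; rw [hb2] at hbt; exact absurd hbt (by simp)
    · rw [h2] at hbt; rw [hb2] at hbt; exact absurd hbt (by simp)
  · -- a = fCard v 3, flipped
    rcases hB2 with ⟨rfl, hb1⟩ | ⟨rfl, hb2⟩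
    · -- c2 = fCard v 1 unflipped: derive contradiction
      rcases hB3 with ⟨rfl, hb2'⟩ | ⟨h1, hbt⟩
      · -- c3 = fCard v 2 unflipped, so its hoop is at (v,2)
        have hp : (placedF b (fCard v 2)).1 = ((v, 2) : V × ℕ) := by
          simp only [fCard] at hb2' ⊢
          simp [placedF, hb2']
        have := haU _ hc3S hp
        simp [fCard, Prod.ext_iff] at this
      · rw [h1] at hbt; rw [hb1] at hbt; exact absurd hbt (by simp)
    · -- c2 = fCard v 2 flipped
      rcases hB3 with ⟨h2, hbf⟩ | ⟨rfl, hb1⟩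
      · rw [h2] at hbf; rw [hb2] at hbf; exact absurd hbf (by simp)
      · refine ⟨?_, ?_, ?_⟩
        · intro j hj
          fin_cases hj <;> assumption
        · rw [hb1, hb2]
        · rw [hb2, hb3]

theorem stmt8 {V : Type} [DecidableEq V] [Fintype V] [Nonempty V] (E : Finset (V × V))
    (S : Finset (GCard V)) (hSC : S ⊆ cardSet E) (b : GCard V → Bool)
    (hsw : IsFlipSwishWith S b) (hcard : S.card = 4 * Fintype.card V) :
    ∀ v : V, (∀ j ∈ ({1, 2, 3} : Finset ℕ), fCard v j ∈ S) ∧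
      b (fCard v 1) = b (fCard v 2) ∧ b (fCard v 2) = b (fCard v 3) :=
  stmt8' E S hSC b hsw hcard
end

section
/- Let G = (V,E) be a finite directed graph, and define the directed graph G' with vertex set V × {1,2,3} and edge set consisting of ((v,1),(v,2)) and ((v,2),(v,3)) for each v ∈ V, together with ((u,3),(v,1)) for each edge (u,v) ∈ E. Then G has an even dicycle-factor if and only if G' has an even dicycle-factor. -/
/-- The vertex-split graph `G'` on `V × {1,2,3}` (columns encoded by `Fin 3`):
edges `((v,1),(v,2))` and `((v,2),(v,3))` for every `v ∈ V`, and `((u,3),(v,1))`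
for every edge `(u,v) ∈ E`. -/
def splitEdges {V : Type} [DecidableEq V] [Fintype V] (E : Finset (V × V)) :
    Finset ((V × Fin 3) × (V × Fin 3)) :=
  (Finset.univ.image fun v : V => (((v, 0) : V × Fin 3), ((v, 1) : V × Fin 3))) ∪
  (Finset.univ.image fun v : V => (((v, 1) : V × Fin 3), ((v, 2) : V × Fin 3))) ∪
  (E.image fun e => (((e.1, 2) : V × Fin 3), ((e.2, 0) : V × Fin 3)))

set_option linter.unusedSectionVars false

section
variable {V : Type}

/-- The split permutation on `V × Fin 3`. -/
def splitPerm (π : Equiv.Perm V) : Equiv.Perm (V × Fin 3) where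
  toFun p := if p.2 = 0 then (p.1, 1) else if p.2 = 1 then (p.1, 2) else (π p.1, 0)
  invFun p := if p.2 = 0 then (π.symm p.1, 2) else if p.2 = 1 then (p.1, 0) else (p.1, 1)
  left_inv p := by obtain ⟨v, i⟩ := p; fin_cases i <;> simp
  right_inv p := by obtain ⟨v, i⟩ := p; fin_cases i <;> simp

lemma splitPerm_apply0 (π : Equiv.Perm V) (v : V) : splitPerm π (v, 0) = (v, 1) := rfl
lemma splitPerm_apply1 (π : Equiv.Perm V) (v : V) : splitPerm π (v, 1) = (v, 2) := rfl
lemma splitPerm_apply2 (π : Equiv.Perm V) (v : V) : splitPerm π (v, 2) = (π v, 0) := rfl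

lemma splitPerm_apply2' (π : Equiv.Perm V) (v : V) {i : Fin 3} (h0 : i ≠ 0) (h1 : i ≠ 1) :
    splitPerm π (v, i) = (π v, 0) := by
  show (if i = 0 then _ else if i = 1 then _ else _) = _
  simp [h0, h1]

/-- In a finite type, any zpow of a permutation is a natural pow. -/
lemma exists_pow_eq_zpow {W : Type} [Fintype W] [DecidableEq W]
    (σ : Equiv.Perm W) (m : ℤ) : ∃ n : ℕ, σ ^ m = σ ^ n := by
  refine ⟨(m % (orderOf σ : ℤ)).toNat, ?_⟩
  have hpos : 0 < orderOf σ := orderOf_pos σ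
  have hnonneg : 0 ≤ m % (orderOf σ : ℤ) :=
    Int.emod_nonneg m (by exact_mod_cast hpos.ne')
  rw [← zpow_natCast, Int.toNat_of_nonneg hnonneg, zpow_mod_orderOf]

lemma splitPerm_pow_three (π : Equiv.Perm V) :
    splitPerm π ^ 3 = Equiv.prodCongr π (Equiv.refl (Fin 3)) := by
  ext ⟨v, i⟩ <;> fin_cases i <;>
    simp [pow_succ, Equiv.Perm.mul_apply, splitPerm_apply0, splitPerm_apply1, splitPerm_apply2]

lemma splitPerm_pow_fst (π : Equiv.Perm V) (n : ℕ) :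
    ∀ (v : V) (i : Fin 3), ∃ k : ℕ, ((splitPerm π ^ n) (v, i)).1 = (π ^ k) v := by
  induction n with
  | zero => exact fun v i => ⟨0, rfl⟩
  | succ n ih =>
    intro v i
    rw [pow_succ, Equiv.Perm.mul_apply]
    by_cases h0 : i = 0
    · subst h0; rw [splitPerm_apply0]; exact ih v 1
    · by_cases h1 : i = 1
      · subst h1; rw [splitPerm_apply1]; exact ih v 2
      · rw [splitPerm_apply2' π v h0 h1]
        obtain ⟨k, hk⟩ := ih (π v) 0
        exact ⟨k + 1, by rw [hk, pow_succ, Equiv.Perm.mul_apply]⟩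

/-- The product-congr monoid hom. -/
def prodCongrHom3 : Equiv.Perm V →* Equiv.Perm (V × Fin 3) where
  toFun σ := Equiv.prodCongr σ (Equiv.refl _)
  map_one' := Equiv.ext fun p => rfl
  map_mul' σ τ := Equiv.ext fun p => rfl

variable [DecidableEq V] [Fintype V]

lemma splitPerm_zpow_three_mul (π : Equiv.Perm V) (m : ℤ) (v : V) :
    (splitPerm π ^ (3 * m)) (v, (0 : Fin 3)) = ((π ^ m) v, (0 : Fin 3)) := by
  have h3 : (splitPerm π) ^ ((3 : ℤ)) = prodCongrHom3 π := by
    rw [show ((3:ℤ)) = ((3:ℕ) : ℤ) by norm_num, zpow_natCast, splitPerm_pow_three]; rfl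
  rw [zpow_mul, h3, ← map_zpow]
  rfl

/-- Orbit of any `(v,i)` under `splitPerm π` is (orbit of `v` under `π`) × everything. -/
lemma splitPerm_orbit (π : Equiv.Perm V) (v : V) (i : Fin 3) :
    {u : V × Fin 3 | ∃ m : ℤ, (splitPerm π ^ m) (v, i) = u} =
      {u : V | ∃ m : ℤ, (π ^ m) v = u} ×ˢ (Set.univ : Set (Fin 3)) := by
  ext ⟨u, j⟩
  simp only [Set.mem_setOf_eq, Set.mem_prod, Set.mem_univ, and_true]
  constructor
  · rintro ⟨m, h⟩
    obtain ⟨n, hn⟩ := exists_pow_eq_zpow (splitPerm π) m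
    rw [hn] at h
    obtain ⟨k, hk⟩ := splitPerm_pow_fst π n v i
    refine ⟨(k : ℤ), ?_⟩
    rw [zpow_natCast, ← hk, h]
  · rintro ⟨m, rfl⟩
    obtain ⟨a, c, hac⟩ : ∃ a c : ℕ, (splitPerm π ^ a) (v, i) = ((π ^ c) v, (0 : Fin 3)) := by
      fin_cases i
      · exact ⟨0, 0, by simp⟩
      · exact ⟨2, 1, by simp [pow_succ, Equiv.Perm.mul_apply, splitPerm]⟩
      · exact ⟨1, 1, by simp [splitPerm]⟩
    obtain ⟨b, hb⟩ : ∃ b : ℕ, ∀ w : V, (splitPerm π ^ b) (w, (0 : Fin 3)) = (w, j) := by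
      fin_cases j
      · exact ⟨0, fun w => rfl⟩
      · exact ⟨1, fun w => by simp [splitPerm]⟩
      · exact ⟨2, fun w => by simp [pow_succ, Equiv.Perm.mul_apply, splitPerm]⟩
    refine ⟨(b : ℤ) + (3 * (m - (c : ℤ)) + (a : ℤ)), ?_⟩
    rw [zpow_add, zpow_add, Equiv.Perm.mul_apply, Equiv.Perm.mul_apply,
      zpow_natCast (splitPerm π) a, hac, splitPerm_zpow_three_mul,
      ← zpow_natCast π c, ← Equiv.Perm.mul_apply, ← zpow_add, sub_add_cancel,
      zpow_natCast (splitPerm π) b, hb]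

lemma card_orbit_split (π : Equiv.Perm V) (v : V) (i : Fin 3) :
    Nat.card {u : V × Fin 3 | ∃ m : ℤ, (splitPerm π ^ m) (v, i) = u} =
      Nat.card {u : V | ∃ m : ℤ, (π ^ m) v = u} * 3 := by
  have h3 : Nat.card ↥(Set.univ : Set (Fin 3)) = 3 := by
    rw [Nat.card_congr (Equiv.Set.univ (Fin 3)), Nat.card_eq_fintype_card, Fintype.card_fin]
  rw [splitPerm_orbit, Nat.card_congr (Equiv.Set.prod _ _), Nat.card_prod, h3]

end

theorem stmt9 {V : Type} [DecidableEq V] [Fintype V] (E : Finset (V × V)) :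
    (∃ F, IsEvenDicycleFactor E F) ↔
    (∃ F', IsEvenDicycleFactor (splitEdges E) F') := by
  constructor
  · rintro ⟨F, π, -, hE, hEven⟩
    refine ⟨Finset.univ.image (fun p => (p, splitPerm π p)), splitPerm π, rfl, ?_, ?_⟩
    · rintro ⟨v, i⟩
      fin_cases i <;> simp [splitEdges, splitPerm]
      · exact hE v
    · rintro ⟨v, i⟩
      rw [card_orbit_split]
      exact (hEven v).mul_right 3
  · rintro ⟨F, π', -, hE, hEven⟩
    have hstruct : ∀ v : V, π' (v, 0) = (v, 1) ∧ π' (v, 1) = (v, 2) ∧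
        ∃ w, π' (v, 2) = (w, 0) ∧ (v, w) ∈ E := by
      intro v
      have h0 := hE (v, 0); have h1 := hE (v, 1); have h2 := hE (v, 2)
      simp only [splitEdges, Finset.mem_union, Finset.mem_image, Finset.mem_univ, true_and,
        Prod.mk.injEq, Prod.exists] at h0 h1 h2
      refine ⟨?_, ?_, ?_⟩
      · rcases h0 with (⟨u, ⟨hu1, hu2⟩, hu3⟩ | ⟨u, ⟨hu1, hu2⟩, hu3⟩) | ⟨a, b, hab, ⟨hu1, hu2⟩, hu3⟩
        · rw [← hu3, hu1]
        · exact absurd hu2 (by decide)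
        · exact absurd hu2 (by decide)
      · rcases h1 with (⟨u, ⟨hu1, hu2⟩, hu3⟩ | ⟨u, ⟨hu1, hu2⟩, hu3⟩) | ⟨a, b, hab, ⟨hu1, hu2⟩, hu3⟩
        · exact absurd hu2 (by decide)
        · rw [← hu3, hu1]
        · exact absurd hu2 (by decide)
      · rcases h2 with (⟨u, ⟨hu1, hu2⟩, hu3⟩ | ⟨u, ⟨hu1, hu2⟩, hu3⟩) | ⟨a, b, hab, ⟨hu1, hu2⟩, hu3⟩
        · exact absurd hu2 (by decide)
        · exact absurd hu2 (by decide)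
        · exact ⟨b, hu3.symm, by rwa [hu1] at hab⟩
    set f : V → V := fun v => (π' (v, 2)).1 with hfdef
    have hf : ∀ v : V, π' (v, 2) = (f v, 0) ∧ (v, f v) ∈ E := by
      intro v
      obtain ⟨-, -, w, hw, hwE⟩ := hstruct v
      have : f v = w := by rw [hfdef]; simp [hw]
      rw [this]; exact ⟨hw, hwE⟩
    have hinj : Function.Injective f := by
      intro a b h
      have : π' (a, 2) = π' (b, 2) := by rw [(hf a).1, (hf b).1, h]
      have := π'.injective this
      exact (Prod.ext_iff.mp this).1
    let π : Equiv.Perm V := Equiv.ofBijective f (Finite.injective_iff_bijective.mp hinj)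
    have hπ : ∀ v, π v = f v := fun v => rfl
    have hsplit : π' = splitPerm π := by
      apply Equiv.ext
      rintro ⟨v, i⟩
      fin_cases i
      · show π' (v, 0) = splitPerm π (v, 0)
        rw [(hstruct v).1]; rfl
      · show π' (v, 1) = splitPerm π (v, 1)
        rw [(hstruct v).2.1]; rfl
      · show π' (v, 2) = splitPerm π (v, 2)
        rw [(hf v).1, splitPerm_apply2, hπ]
    refine ⟨Finset.univ.image (fun v => (v, π v)), π, rfl, fun v => by rw [hπ]; exact (hf v).2,
      fun v => ?_⟩
    have := hEven (v, 0)
    rw [hsplit, card_orbit_split] at this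
    rcases Nat.even_mul.mp this with h | h
    · exact h
    · exact absurd h (by decide)
end
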